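/- arXiv:2310.10373 — 6 statements merged into one kernel-verified Lean document; each statement's English description precedes it below -/
import Mathlib

section
/- Let W ∈ ℝ^p be a vector whose entries have pairwise distinct absolute values, and let σ = (σ_1,…,σ_p) be the permutation of {1,…,p} sorting W by decreasing modulus, i.e. |W_{σ_1}| > |W_{σ_2}| > ⋯ > |W_{σ_p}|. For j ∈ {1,…,p} define Z_j = |{k ∈ {1,…,p} : W_k ≤ −W_j}|. Then for every k ∈ {1,…,p} such that W_{σ_k} > 0, one has Z_{σ_k} = |{j ∈ {1,…,k−1} : W_{σ_j} < 0}|. -/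
/-- Let `W ∈ ℝ^p` have pairwise distinct absolute values and let `σ` be the permutation
sorting `W` by strictly decreasing modulus. With `Z_j = |{k : W_k ≤ -W_j}|`, for every `k`
with `W_{σ_k} > 0` we have `Z_{σ_k} = |{j < k : W_{σ_j} < 0}|`. -/
theorem Z_eq_card_neg_before (p : ℕ) (W : Fin p → ℝ)
    (hdist : ∀ i j : Fin p, i ≠ j → |W i| ≠ |W j|)
    (σ : Equiv.Perm (Fin p))
    (hσ : ∀ i j : Fin p, i < j → |W (σ j)| < |W (σ i)|)
    (k : Fin p) (hk : 0 < W (σ k)) :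
    (Finset.univ.filter (fun m : Fin p => W m ≤ -W (σ k))).card
      = (Finset.univ.filter (fun j : Fin p => j < k ∧ W (σ j) < 0)).card := by
  have key : ∀ j : Fin p, W (σ j) ≤ -W (σ k) ↔ j < k ∧ W (σ j) < 0 := by
    intro j
    constructor
    · intro h
      have hneg : W (σ j) < 0 := lt_of_le_of_lt h (by linarith)
      refine ⟨?_, hneg⟩
      rcases lt_trichotomy j k with h1 | h1 | h1
      · exact h1
      · exfalso; rw [h1] at hneg; linarith
      · have := hσ k j h1
        rw [abs_of_neg hneg, abs_of_pos hk] at this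
        linarith
    · rintro ⟨hjk, hneg⟩
      have := hσ j k hjk
      rw [abs_of_neg hneg, abs_of_pos hk] at this
      linarith
  refine Finset.card_bij' (fun j _ => σ.symm j) (fun j _ => σ j) ?_ ?_ ?_ ?_
  · intro a ha
    simp only [Finset.mem_filter, Finset.mem_univ, true_and] at ha ⊢
    rw [← (key (σ.symm a))]
    simpa using ha
  · intro a ha
    simp only [Finset.mem_filter, Finset.mem_univ, true_and] at ha ⊢
    exact (key a).mpr ha
  · intro a _; simp
  · intro a _; simp
end

section
/- Let p ≥ 1 and H0 ⊆ {1,…,p} be nonempty. Let χ = (χ_1,…,χ_p) be a random vector with values in {−1,1}^p such that the family (χ_j)_{j∈H0} is i.i.d. uniform on {−1,1} and is independent of (χ_j)_{j∉H0}. Define Z_j = |{k < j : χ_k = −1}| and N(t) = |{j ∈ H0 : χ_j = 1 and (1 + Z_j)/p < t}|. Independently, let χ^0 = (χ^0_1,…,χ^0_p) be i.i.d. uniform on {−1,1}, and define Z^0_j = |{k < j : χ^0_k = −1}| and N^0(t) = |{j ∈ {1,…,p} : χ^0_j = 1 and (1 + Z^0_j)/p < t}|. Then for every t ∈ ℝ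 and every integer m ≥ 0, ℙ(N(t) ≥ m) ≤ ℙ(N^0(t) ≥ m); that is, N(t) is stochastically dominated by N^0(t). -/
open MeasureTheory ProbabilityTheory

/-- `Z_j = |{k < j : χ_k = -1}|`. -/
def Zstat (p : ℕ) (χ : Fin p → ℤ) (j : Fin p) : ℕ :=
  (Finset.univ.filter (fun k : Fin p => k < j ∧ χ k = -1)).card

/-- `N(t) = |{j ∈ H0 : χ_j = 1 ∧ (1 + Z_j)/p < t}|`. -/
noncomputable def Ncount (p : ℕ) (H0 : Finset (Fin p)) (χ : Fin p → ℤ) (t : ℝ) : ℕ :=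
  (H0.filter (fun j => χ j = 1 ∧ (1 + (Zstat p χ j : ℝ)) / p < t)).card

namespace NcountAux

def sgn (b : Bool) : ℤ := if b then 1 else -1

lemma sgn_injective : Function.Injective sgn := by
  intro a b hab; cases a <;> cases b <;> simp [sgn] at hab ⊢

lemma sgn_decide {x : ℤ} (hx : x = 1 ∨ x = -1) : sgn (decide (x = 1)) = x := by
  rcases hx with h | h <;> simp [h, sgn]

variable {p : ℕ}

noncomputable def oE (H0 : Finset (Fin p)) : Fin H0.card ≃o {x // x ∈ H0} :=
  H0.orderIsoOfFin rfl

noncomputable def psi (H0 : Finset (Fin p)) (u : Fin H0.card → ℤ) : Fin p → ℤ :=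
  fun j => if hj : j ∈ H0 then u ((oE H0).symm ⟨j, hj⟩) else 1

lemma psi_mem (H0 : Finset (Fin p)) (u : Fin H0.card → ℤ) {j : Fin p} (hj : j ∈ H0) :
    psi H0 u j = u ((oE H0).symm ⟨j, hj⟩) := dif_pos hj

lemma psi_not_mem (H0 : Finset (Fin p)) (u : Fin H0.card → ℤ) {j : Fin p} (hj : j ∉ H0) :
    psi H0 u j = 1 := dif_neg hj

lemma psi_apply_coe (H0 : Finset (Fin p)) (u : Fin H0.card → ℤ) (i : Fin H0.card) :
    psi H0 u ↑(oE H0 i) = u i := by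
  rw [psi_mem H0 u (oE H0 i).2]
  congr 1
  rw [Subtype.coe_eta, OrderIso.symm_apply_apply]

lemma psi_comp_eq_of_mem (H0 : Finset (Fin p)) (f : Fin p → ℤ) {j : Fin p} (hj : j ∈ H0) :
    psi H0 (fun i => f ↑(oE H0 i)) j = f j := by
  simp only [psi_mem H0 _ hj, OrderIso.apply_symm_apply]

lemma forall_mem_iff (H0 : Finset (Fin p)) (f : Fin p → ℤ) (u : Fin H0.card → ℤ) :
    (∀ j ∈ H0, f j = psi H0 u j) ↔ ∀ i, f ↑(oE H0 i) = u i := by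
  constructor
  · intro H i
    rw [H ↑(oE H0 i) (oE H0 i).2, psi_apply_coe]
  · intro H j hj
    rw [psi_mem H0 u hj]
    have := H ((oE H0).symm ⟨j, hj⟩)
    rwa [OrderIso.apply_symm_apply] at this

lemma Ncount_le_psi (H0 : Finset (Fin p)) (f : Fin p → ℤ) (t : ℝ) :
    Ncount p H0 f t ≤ Ncount p H0 (psi H0 (fun i => f ↑(oE H0 i))) t := by
  unfold Ncount
  apply Finset.card_le_card
  intro j hj
  simp only [Finset.mem_filter] at hj ⊢
  obtain ⟨hjH, hf1, hlt⟩ := hj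
  refine ⟨hjH, by rw [psi_comp_eq_of_mem H0 f hjH]; exact hf1, ?_⟩
  refine lt_of_le_of_lt ?_ hlt
  have hZ : Zstat p (psi H0 fun i => f ↑(oE H0 i)) j ≤ Zstat p f j := by
    apply Finset.card_le_card
    intro k hk
    simp only [Finset.mem_filter, Finset.mem_univ, true_and] at hk ⊢
    obtain ⟨hkj, hk1⟩ := hk
    refine ⟨hkj, ?_⟩
    by_cases hkH : k ∈ H0
    · rwa [psi_comp_eq_of_mem H0 f hkH] at hk1
    · rw [psi_not_mem H0 _ hkH] at hk1; norm_num at hk1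
  gcongr

lemma Zstat_psi_eq (H0 : Finset (Fin p)) (hle : H0.card ≤ p) (u : Fin H0.card → ℤ)
    (s : Fin p → ℤ) (hs : ∀ i, s (Fin.castLE hle i) = u i) {j : Fin p} (hj : j ∈ H0) :
    Zstat p (psi H0 u) j = Zstat p s (Fin.castLE hle ((oE H0).symm ⟨j, hj⟩)) := by
  unfold Zstat
  apply Finset.card_nbij'
    (i := fun k => if hk : k ∈ H0 then Fin.castLE hle ((oE H0).symm ⟨k, hk⟩) else k)
    (j := fun i => if hi : i.val < H0.card then ↑(oE H0 ⟨i.val, hi⟩) else i)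
  · intro k hk
    simp only [Finset.mem_coe, Finset.mem_filter, Finset.mem_univ, true_and] at hk ⊢
    obtain ⟨hkj, hk1⟩ := hk
    have hkH : k ∈ H0 := by
      by_contra hkH
      rw [psi_not_mem H0 u hkH] at hk1; norm_num at hk1
    rw [dif_pos hkH]
    constructor
    · have h1 : (oE H0).symm ⟨k, hkH⟩ < (oE H0).symm ⟨j, hj⟩ := by
        rw [OrderIso.lt_iff_lt]
        exact Subtype.mk_lt_mk.mpr hkj
      rw [Fin.lt_def] at h1 ⊢
      exact h1
    · rw [hs, ← psi_mem H0 u hkH]; exact hk1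
  · intro i hi
    simp only [Finset.mem_coe, Finset.mem_filter, Finset.mem_univ, true_and] at hi ⊢
    obtain ⟨hij, hi1⟩ := hi
    have hij' : i.val < ((oE H0).symm ⟨j, hj⟩).val := by
      rw [Fin.lt_def] at hij; simpa using hij
    have hiv : i.val < H0.card := lt_trans hij' ((oE H0).symm ⟨j, hj⟩).isLt
    rw [dif_pos hiv]
    constructor
    · have h1 : oE H0 ⟨i.val, hiv⟩ < oE H0 ((oE H0).symm ⟨j, hj⟩) := by
        rw [OrderIso.lt_iff_lt, Fin.lt_def]
        exact hij'
      rw [OrderIso.apply_symm_apply] at h1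
      exact Subtype.coe_lt_coe.mpr h1
    · have h2 : psi H0 u ↑(oE H0 ⟨i.val, hiv⟩) = u ⟨i.val, hiv⟩ := psi_apply_coe H0 u _
      rw [h2, ← hs ⟨i.val, hiv⟩]
      have h3 : Fin.castLE hle (⟨i.val, hiv⟩ : Fin H0.card) = i := by
        apply Fin.ext; rfl
      rwa [h3]
  · intro k hk
    simp only [Finset.mem_coe, Finset.mem_filter, Finset.mem_univ, true_and] at hk
    obtain ⟨hkj, hk1⟩ := hk
    have hkH : k ∈ H0 := by
      by_contra hkH
      rw [psi_not_mem H0 u hkH] at hk1; norm_num at hk1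
    dsimp only; rw [dif_pos hkH]
    have hv : (Fin.castLE hle ((oE H0).symm ⟨k, hkH⟩)).val < H0.card :=
      ((oE H0).symm ⟨k, hkH⟩).isLt
    rw [dif_pos hv]
    have h4 : (⟨(Fin.castLE hle ((oE H0).symm ⟨k, hkH⟩)).val, hv⟩ : Fin H0.card)
        = (oE H0).symm ⟨k, hkH⟩ := by apply Fin.ext; rfl
    rw [h4, OrderIso.apply_symm_apply]
  · intro i hi
    simp only [Finset.mem_coe, Finset.mem_filter, Finset.mem_univ, true_and] at hi
    obtain ⟨hij, hi1⟩ := hi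
    have hij' : i.val < ((oE H0).symm ⟨j, hj⟩).val := by
      rw [Fin.lt_def] at hij; simpa using hij
    have hiv : i.val < H0.card := lt_trans hij' ((oE H0).symm ⟨j, hj⟩).isLt
    dsimp only; rw [dif_pos hiv]
    rw [dif_pos (oE H0 ⟨i.val, hiv⟩).2]
    have h5 : (⟨↑(oE H0 ⟨i.val, hiv⟩), (oE H0 ⟨i.val, hiv⟩).2⟩ : {x // x ∈ H0})
        = oE H0 ⟨i.val, hiv⟩ := Subtype.coe_eta _ _
    rw [h5, OrderIso.symm_apply_apply]
    apply Fin.ext; rfl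

lemma psi_Ncount_le (H0 : Finset (Fin p)) (hle : H0.card ≤ p) (u : Fin H0.card → ℤ)
    (s : Fin p → ℤ) (hs : ∀ i, s (Fin.castLE hle i) = u i) (t : ℝ) :
    Ncount p H0 (psi H0 u) t ≤ Ncount p Finset.univ s t := by
  unfold Ncount
  apply Finset.card_le_card_of_injOn
    (fun k => if hk : k ∈ H0 then Fin.castLE hle ((oE H0).symm ⟨k, hk⟩) else k)
  · intro j hjf
    simp only [Finset.mem_coe, Finset.mem_filter] at hjf
    obtain ⟨hj, h1, hlt⟩ := hjf
    dsimp only; rw [dif_pos hj]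
    simp only [Finset.mem_coe, Finset.mem_filter, Finset.mem_univ, true_and]
    constructor
    · rw [hs, ← psi_mem H0 u hj]; exact h1
    · rw [← Zstat_psi_eq H0 hle u s hs hj]; exact hlt
  · intro a ha b hb hab
    simp only [Finset.coe_filter, Set.mem_setOf_eq] at ha hb
    simp only [dif_pos ha.1, dif_pos hb.1] at hab
    have h1 : (oE H0).symm ⟨a, ha.1⟩ = (oE H0).symm ⟨b, hb.1⟩ := by
      apply Fin.ext
      have := congrArg Fin.val hab
      simpa using this
    have h2 := congrArg (oE H0) h1
    rw [OrderIso.apply_symm_apply, OrderIso.apply_symm_apply] at h2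
    exact congrArg Subtype.val h2

def splitEquiv (h p : ℕ) (hle : h ≤ p) :
    (Fin p → Bool) ≃ (Fin h → Bool) × (Fin (p - h) → Bool) where
  toFun c := (fun i => c (Fin.castLE hle i), fun i => c ⟨h + i.val, by have := i.isLt; omega⟩)
  invFun bc j := if hj : j.val < h then bc.1 ⟨j.val, hj⟩
    else bc.2 ⟨j.val - h, by have := j.isLt; omega⟩
  left_inv c := by
    funext j
    dsimp only
    by_cases hj : j.val < h
    · rw [dif_pos hj]
      exact congrArg c (Fin.ext rfl)
    · rw [dif_neg hj]
      exact congrArg c (Fin.ext (by show h + (j.val - h) = j.val; omega))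
  right_inv bc := by
    refine Prod.ext ?_ ?_
    · funext i
      dsimp only
      rw [dif_pos (show (Fin.castLE hle i).val < h from i.isLt)]
      exact congrArg bc.1 (Fin.ext rfl)
    · funext i
      dsimp only
      rw [dif_neg (show ¬ (h + i.val < h) by omega)]
      exact congrArg bc.2 (Fin.ext (by show h + i.val - h = i.val; omega))

lemma splitEquiv_symm_castLE (h p : ℕ) (hle : h ≤ p)
    (bc : (Fin h → Bool) × (Fin (p - h) → Bool)) (i : Fin h) :
    (splitEquiv h p hle).symm bc (Fin.castLE hle i) = bc.1 i := by
  show (if hj : (Fin.castLE hle i).val < h then _ else _) = bc.1 i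
  rw [dif_pos (show (Fin.castLE hle i).val < h from i.isLt)]
  exact congrArg bc.1 (Fin.ext rfl)

end NcountAux

/-- Let `p ≥ 1` and `H0 ⊆ {1,…,p}` be nonempty. Let `χ` be a random sign vector such that
`(χ_j)_{j∈H0}` is i.i.d. uniform on `{−1,1}` and independent of `(χ_j)_{j∉H0}` (encoded by
`hχlaw`). Independently, let `χ⁰` be i.i.d. uniform on `{−1,1}^p` (encoded by `hχ0law`).
With `N(t) = |{j ∈ H0 : χ_j = 1 ∧ (1+Z_j)/p < t}|` and
`N⁰(t) = |{j : χ⁰_j = 1 ∧ (1+Z⁰_j)/p < t}|`, for every `t ∈ ℝ` and integer `m ≥ 0`,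
`ℙ(N(t) ≥ m) ≤ ℙ(N⁰(t) ≥ m)`: `N(t)` is stochastically dominated by `N⁰(t)`. -/
theorem Ncount_stochasticDomination
    {Ω : Type*} [MeasurableSpace Ω] (μ : Measure Ω) [IsProbabilityMeasure μ]
    (p : ℕ) (hp : 1 ≤ p) (H0 : Finset (Fin p)) (hH0 : H0.Nonempty)
    (χ χ0 : Ω → Fin p → ℤ) (hχm : Measurable χ) (hχ0m : Measurable χ0)
    (hχval : ∀ ω j, χ ω j = 1 ∨ χ ω j = -1)
    (hχ0val : ∀ ω j, χ0 ω j = 1 ∨ χ0 ω j = -1)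
    -- `(χ_j)_{j∈H0}` is i.i.d. uniform on `{−1,1}` and independent of `(χ_j)_{j∉H0}`:
    (hχlaw : ∀ (s : Fin p → ℤ), (∀ j ∈ H0, s j = 1 ∨ s j = -1) →
      ∀ (E : Set (Fin p → ℤ)), MeasurableSet E →
      (∀ f g : Fin p → ℤ, (∀ j ∉ H0, f j = g j) → (f ∈ E ↔ g ∈ E)) →
      μ {ω | (∀ j ∈ H0, χ ω j = s j) ∧ χ ω ∈ E}
        = (1 / 2 : ENNReal) ^ H0.card * μ {ω | χ ω ∈ E})
    -- `χ⁰` is i.i.d. uniform on `{−1,1}^p`: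
    (hχ0law : ∀ s : Fin p → ℤ, (∀ j, s j = 1 ∨ s j = -1) →
      μ {ω | χ0 ω = s} = (1 / 2 : ENNReal) ^ p)
    -- `χ⁰` is independent of `χ`:
    (hindep : IndepFun χ χ0 μ) :
    ∀ (t : ℝ) (m : ℕ),
      μ {ω | m ≤ Ncount p H0 (χ ω) t} ≤ μ {ω | m ≤ Ncount p Finset.univ (χ0 ω) t} := by
  classical
  intro t m
  have hle : H0.card ≤ p := by simpa using H0.card_le_univ
  -- measurability of the elementary events for χ
  have hAmeas : ∀ b : Fin H0.card → Bool,
      MeasurableSet {ω | ∀ i, χ ω ↑(NcountAux.oE H0 i) = NcountAux.sgn (b i)} := by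
    intro b
    have h1 : {ω | ∀ i, χ ω ↑(NcountAux.oE H0 i) = NcountAux.sgn (b i)}
        = ⋂ i, (fun ω => χ ω ↑(NcountAux.oE H0 i)) ⁻¹' {NcountAux.sgn (b i)} := by
      ext ω; simp [Set.mem_iInter]
    rw [h1]
    exact MeasurableSet.iInter fun i =>
      ((measurable_pi_apply _).comp hχm) (measurableSet_singleton _)
  -- measure of the elementary events for χ
  have hAmu : ∀ b : Fin H0.card → Bool,
      μ {ω | ∀ i, χ ω ↑(NcountAux.oE H0 i) = NcountAux.sgn (b i)}
        = (1/2 : ENNReal) ^ H0.card := by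
    intro b
    have hval : ∀ j ∈ H0, NcountAux.psi H0 (fun i => NcountAux.sgn (b i)) j = 1 ∨
        NcountAux.psi H0 (fun i => NcountAux.sgn (b i)) j = -1 := by
      intro j hj
      rw [NcountAux.psi_mem H0 _ hj]
      cases b ((NcountAux.oE H0).symm ⟨j, hj⟩) <;> simp [NcountAux.sgn]
    have h := hχlaw _ hval Set.univ MeasurableSet.univ (fun f g _ => Iff.rfl)
    simp only [Set.mem_univ, and_true, Set.setOf_true, measure_univ, mul_one] at h
    have hsets : {ω | ∀ j ∈ H0, χ ω j = NcountAux.psi H0 (fun i => NcountAux.sgn (b i)) j}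
        = {ω | ∀ i, χ ω ↑(NcountAux.oE H0 i) = NcountAux.sgn (b i)} := by
      ext ω
      exact NcountAux.forall_mem_iff H0 (χ ω) _
    rw [← hsets]
    exact h
  have hdisjA : (↑(Finset.univ.filter (fun b : Fin H0.card → Bool =>
      m ≤ Ncount p H0 (NcountAux.psi H0 fun i => NcountAux.sgn (b i)) t)) :
        Set (Fin H0.card → Bool)).PairwiseDisjoint
      (fun b => {ω | ∀ i, χ ω ↑(NcountAux.oE H0 i) = NcountAux.sgn (b i)}) := by
    intro b1 _ b2 _ hne
    refine Set.disjoint_left.mpr fun ω h1 h2 => hne ?_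
    funext i
    apply NcountAux.sgn_injective
    rw [← h1 i]
    exact h2 i
  have hstep2 : μ {ω | m ≤ Ncount p H0 (NcountAux.psi H0 fun i => χ ω ↑(NcountAux.oE H0 i)) t}
      = ((Finset.univ.filter (fun b : Fin H0.card → Bool =>
          m ≤ Ncount p H0 (NcountAux.psi H0 fun i => NcountAux.sgn (b i)) t)).card : ENNReal)
        * (1/2 : ENNReal) ^ H0.card := by
    have hunion : {ω | m ≤ Ncount p H0 (NcountAux.psi H0 fun i => χ ω ↑(NcountAux.oE H0 i)) t}
        = ⋃ b ∈ Finset.univ.filter (fun b : Fin H0.card → Bool =>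
            m ≤ Ncount p H0 (NcountAux.psi H0 fun i => NcountAux.sgn (b i)) t),
          {ω | ∀ i, χ ω ↑(NcountAux.oE H0 i) = NcountAux.sgn (b i)} := by
      ext ω
      simp only [Set.mem_setOf_eq, Set.mem_iUnion, Finset.mem_filter, Finset.mem_univ, true_and,
        exists_prop]
      constructor
      · intro hm
        refine ⟨fun i => decide (χ ω ↑(NcountAux.oE H0 i) = 1), ?_,
          fun i => (NcountAux.sgn_decide (hχval ω _)).symm⟩
        have he : (fun i => NcountAux.sgn (decide (χ ω ↑(NcountAux.oE H0 i) = 1)))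
            = fun i => χ ω ↑(NcountAux.oE H0 i) :=
          funext fun i => NcountAux.sgn_decide (hχval ω _)
        rw [he]
        exact hm
      · rintro ⟨b, hbT, hb⟩
        have he : (fun i => χ ω ↑(NcountAux.oE H0 i)) = fun i => NcountAux.sgn (b i) :=
          funext hb
        rw [he]
        exact hbT
    rw [hunion, measure_biUnion_finset hdisjA (fun b _ => hAmeas b)]
    simp only [hAmu]
    rw [Finset.sum_const, nsmul_eq_mul]
  -- χ0 side
  have hBmu : ∀ c : Fin p → Bool,
      μ {ω | χ0 ω = fun j => NcountAux.sgn (c j)} = (1/2 : ENNReal) ^ p :=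
    fun c => hχ0law _ (fun j => by cases c j <;> simp [NcountAux.sgn])
  have hBmeas : ∀ c : Fin p → Bool,
      MeasurableSet {ω | χ0 ω = fun j => NcountAux.sgn (c j)} := by
    intro c
    have h1 : {ω | χ0 ω = fun j => NcountAux.sgn (c j)}
        = ⋂ j, (fun ω => χ0 ω j) ⁻¹' {NcountAux.sgn (c j)} := by
      ext ω
      simp [Set.mem_iInter, funext_iff]
    rw [h1]
    exact MeasurableSet.iInter fun j =>
      ((measurable_pi_apply _).comp hχ0m) (measurableSet_singleton _)
  have hdisjB : (↑(Finset.univ.filter (fun c : Fin p → Bool =>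
      m ≤ Ncount p H0 (NcountAux.psi H0 fun i => NcountAux.sgn (c (Fin.castLE hle i))) t)) :
        Set (Fin p → Bool)).PairwiseDisjoint
      (fun c => {ω | χ0 ω = fun j => NcountAux.sgn (c j)}) := by
    intro c1 _ c2 _ hne
    refine Set.disjoint_left.mpr fun ω h1 h2 => hne ?_
    funext j
    apply NcountAux.sgn_injective
    exact congrFun ((Set.mem_setOf_eq ▸ h1).symm.trans (Set.mem_setOf_eq ▸ h2)) j
  have hstep3 : μ {ω | m ≤ Ncount p H0 (NcountAux.psi H0 fun i => χ0 ω (Fin.castLE hle i)) t}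
      = ((Finset.univ.filter (fun c : Fin p → Bool =>
          m ≤ Ncount p H0 (NcountAux.psi H0 fun i => NcountAux.sgn (c (Fin.castLE hle i))) t)).card :
            ENNReal) * (1/2 : ENNReal) ^ p := by
    have hunion : {ω | m ≤ Ncount p H0 (NcountAux.psi H0 fun i => χ0 ω (Fin.castLE hle i)) t}
        = ⋃ c ∈ Finset.univ.filter (fun c : Fin p → Bool =>
            m ≤ Ncount p H0 (NcountAux.psi H0 fun i => NcountAux.sgn (c (Fin.castLE hle i))) t),
          {ω | χ0 ω = fun j => NcountAux.sgn (c j)} := by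
      ext ω
      simp only [Set.mem_setOf_eq, Set.mem_iUnion, Finset.mem_filter, Finset.mem_univ, true_and,
        exists_prop]
      constructor
      · intro hm
        refine ⟨fun j => decide (χ0 ω j = 1), ?_,
          funext fun j => (NcountAux.sgn_decide (hχ0val ω j)).symm⟩
        have he : (fun i => NcountAux.sgn (decide (χ0 ω (Fin.castLE hle i) = 1)))
            = fun i => χ0 ω (Fin.castLE hle i) :=
          funext fun i => NcountAux.sgn_decide (hχ0val ω _)
        rw [he]
        exact hm
      · rintro ⟨c, hcT, hc⟩
        have he : (fun i => χ0 ω (Fin.castLE hle i))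
            = fun i => NcountAux.sgn (c (Fin.castLE hle i)) :=
          funext fun i => congrFun hc _
        rw [he]
        exact hcT
    rw [hunion, measure_biUnion_finset hdisjB (fun c _ => hBmeas c)]
    simp only [hBmu]
    rw [Finset.sum_const, nsmul_eq_mul]
  -- cardinality comparison
  have hcard : (Finset.univ.filter (fun c : Fin p → Bool =>
      m ≤ Ncount p H0 (NcountAux.psi H0 fun i => NcountAux.sgn (c (Fin.castLE hle i))) t)).card
      = (Finset.univ.filter (fun b : Fin H0.card → Bool =>
          m ≤ Ncount p H0 (NcountAux.psi H0 fun i => NcountAux.sgn (b i)) t)).card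
        * 2 ^ (p - H0.card) := by
    have hbij : (Finset.univ.filter (fun c : Fin p → Bool =>
        m ≤ Ncount p H0 (NcountAux.psi H0 fun i => NcountAux.sgn (c (Fin.castLE hle i))) t)).card
        = ((Finset.univ.filter (fun b : Fin H0.card → Bool =>
            m ≤ Ncount p H0 (NcountAux.psi H0 fun i => NcountAux.sgn (b i)) t))
          ×ˢ (Finset.univ : Finset (Fin (p - H0.card) → Bool))).card := by
      apply Finset.card_nbij' (i := fun c => NcountAux.splitEquiv H0.card p hle c)
        (j := fun bc => (NcountAux.splitEquiv H0.card p hle).symm bc)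
      · intro c hc
        simp only [Finset.mem_coe, Finset.mem_filter, Finset.mem_univ, true_and] at hc
        rw [Finset.mem_coe, Finset.mem_product]
        refine ⟨?_, Finset.mem_univ _⟩
        simp only [Finset.mem_coe, Finset.mem_filter, Finset.mem_univ, true_and]
        exact hc
      · intro bc hbc
        rw [Finset.mem_coe, Finset.mem_product] at hbc
        have h1 := hbc.1
        simp only [Finset.mem_coe, Finset.mem_filter, Finset.mem_univ, true_and] at h1 ⊢
        have he : (fun i => NcountAux.sgn
              ((NcountAux.splitEquiv H0.card p hle).symm bc (Fin.castLE hle i)))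
            = fun i => NcountAux.sgn (bc.1 i) :=
          funext fun i => congrArg _ (NcountAux.splitEquiv_symm_castLE _ _ _ _ i)
        rw [he]
        exact h1
      · intro c _
        exact (NcountAux.splitEquiv H0.card p hle).symm_apply_apply c
      · intro bc _
        exact (NcountAux.splitEquiv H0.card p hle).apply_symm_apply bc
    rw [hbij, Finset.card_product]
    congr 1
    simp [Fintype.card_fun]
  -- arithmetic in ENNReal
  have harith : ((Finset.univ.filter (fun b : Fin H0.card → Bool =>
      m ≤ Ncount p H0 (NcountAux.psi H0 fun i => NcountAux.sgn (b i)) t)).card : ENNReal)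
        * (1/2 : ENNReal) ^ H0.card
      = (((Finset.univ.filter (fun b : Fin H0.card → Bool =>
          m ≤ Ncount p H0 (NcountAux.psi H0 fun i => NcountAux.sgn (b i)) t)).card
            * 2 ^ (p - H0.card) : ℕ) : ENNReal) * (1/2 : ENNReal) ^ p := by
    push_cast
    have h2 : ((1 : ENNReal)/2) ^ p = (1/2 : ENNReal) ^ H0.card * (1/2 : ENNReal) ^ (p - H0.card) := by
      rw [← pow_add, Nat.add_sub_cancel' hle]
    have h3 : ((2 : ENNReal)) ^ (p - H0.card) * ((1 : ENNReal)/2) ^ (p - H0.card) = 1 := by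
      rw [← mul_pow, one_div, ENNReal.mul_inv_cancel (by norm_num) (by norm_num), one_pow]
    rw [h2]
    have h4 : ∀ (x : ENNReal),
        x * 2 ^ (p - H0.card) * ((1/2 : ENNReal) ^ H0.card * (1/2 : ENNReal) ^ (p - H0.card))
        = x * (1/2 : ENNReal) ^ H0.card
          * (2 ^ (p - H0.card) * (1/2 : ENNReal) ^ (p - H0.card)) := by
      intro x
      ring
    rw [h4, h3, mul_one]
  -- assemble
  calc μ {ω | m ≤ Ncount p H0 (χ ω) t}
      ≤ μ {ω | m ≤ Ncount p H0 (NcountAux.psi H0 fun i => χ ω ↑(NcountAux.oE H0 i)) t} :=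
        measure_mono fun ω hω => le_trans hω (NcountAux.Ncount_le_psi H0 (χ ω) t)
    _ = ((Finset.univ.filter (fun b : Fin H0.card → Bool =>
          m ≤ Ncount p H0 (NcountAux.psi H0 fun i => NcountAux.sgn (b i)) t)).card : ENNReal)
        * (1/2 : ENNReal) ^ H0.card := hstep2
    _ = ((Finset.univ.filter (fun c : Fin p → Bool =>
          m ≤ Ncount p H0 (NcountAux.psi H0 fun i => NcountAux.sgn (c (Fin.castLE hle i))) t)).card :
            ENNReal) * (1/2 : ENNReal) ^ p := by
        rw [hcard]
        exact_mod_cast harith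
    _ = μ {ω | m ≤ Ncount p H0 (NcountAux.psi H0 fun i => χ0 ω (Fin.castLE hle i)) t} :=
        hstep3.symm
    _ ≤ μ {ω | m ≤ Ncount p Finset.univ (χ0 ω) t} :=
        measure_mono fun ω hω => le_trans hω
          (NcountAux.psi_Ncount_le H0 hle _ (χ0 ω) (fun i => rfl) t)
end

section
/- Let p ≥ 1 and H0 ⊆ {1,…,p} be nonempty with |H0| = p0. Let χ = (χ_1,…,χ_p) be a random vector with values in {−1,1}^p such that the family (χ_j)_{j∈H0} is i.i.d. uniform on {−1,1} and is independent of (χ_j)_{j∉H0}. Define Z_j = |{k < j : χ_k = −1}| and π_j = (1 + Z_j)/p if χ_j = 1, π_j = 1 if χ_j = −1. Independently, let χ^0 = (χ^0_1,…,χ^0_p) be i.i.d. uniform on {−1,1} and define Z^0_j = |{k < j : χ^0_k = −1}| and π^0_j = (1 + Z^0_j)/p if χ^0_j = 1, π^0_j = 1 if χ^0_j = −1. Then for every threshold family t = (t_1,…,t_{kmax}) with 0 ≤ t_1 ≤ ⋯ ≤ t_{kmax} ≤ 1, one has ℙ(∃ k ∈ {1,…, min(kmax, p0)} : π_{(k:H0)}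 < t_k) ≤ ℙ(∃ k ∈ {1,…, kmax} : π^0_{(k)} < t_k). -/
open MeasureTheory ProbabilityTheory

/-- The `k`-th smallest value (1-indexed) of `v` over the finite index set `A`. -/
noncomputable def orderStat {ι : Type*} (A : Finset ι) (v : ι → ℝ) (k : ℕ) : ℝ :=
  (Multiset.sort (A.val.map v) (· ≤ ·)).getD (k - 1) 0

/-- `π_j = (1 + Z_j)/p` if `χ_j = 1`, and `π_j = 1` if `χ_j = -1`. -/
noncomputable def piStat (p : ℕ) (χ : Fin p → ℤ) (j : Fin p) : ℝ :=
  if χ j = 1 then (1 + (Zstat p χ j : ℝ)) / p else 1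

section aux

lemma sorted_get_lt (t : ℝ) : ∀ (L : List ℝ), L.Pairwise (· ≤ ·) → ∀ i (h : i < L.length),
    (L.get ⟨i, h⟩ < t ↔ i < L.countP (fun x => decide (x < t))) := by
  intro L
  induction L with
  | nil => intro _ i h; simp at h
  | cons a L ih =>
    intro hs i h
    have hsL : L.Pairwise (· ≤ ·) := hs.of_cons
    have hall : ∀ x ∈ L, a ≤ x := fun x hx => (List.pairwise_cons.mp hs).1 x hx
    rw [List.countP_cons]
    cases i with
    | zero =>
      simp only [List.get]
      constructor
      · intro hat
        simp [hat]
      · intro hpos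
        by_contra hat
        push_neg at hat
        have h1 : L.countP (fun x => decide (x < t)) = 0 := by
          rw [List.countP_eq_zero]
          intro x hx
          simp only [decide_eq_true_eq]
          exact not_lt.mpr (le_trans hat (hall x hx))
        simp [h1, not_lt.mpr hat] at hpos
    | succ i =>
      simp only [List.get]
      have h' : i < L.length := by simpa using h
      rw [ih hsL i h']
      by_cases hat : a < t
      · simp [hat]
      · have h1 : L.countP (fun x => decide (x < t)) = 0 := by
          rw [List.countP_eq_zero]
          intro x hx
          simp only [decide_eq_true_eq]
          exact not_lt.mpr (le_trans (not_lt.mp hat) (hall x hx))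
        simp [h1, hat]

open Classical in
lemma orderStat_lt_iff {ι : Type*} (A : Finset ι) (v : ι → ℝ) (t : ℝ) (k : ℕ)
    (hk1 : 1 ≤ k) (hk : k ≤ A.card) :
    orderStat A v k < t ↔ k ≤ (A.filter (fun j => v j < t)).card := by
  set L := Multiset.sort (A.val.map v) (· ≤ ·) with hL
  have hlen : L.length = A.card := by
    rw [hL, Multiset.length_sort, Multiset.card_map]; rfl
  have hik : k - 1 < L.length := by omega
  have hget : orderStat A v k = L.get ⟨k - 1, hik⟩ := by
    rw [orderStat, ← hL, List.getD_eq_getElem?_getD, List.getElem?_eq_getElem hik]; rfl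
  have hsorted : L.Pairwise (· ≤ ·) := Multiset.pairwise_sort _ _
  have hcount : L.countP (fun x => decide (x < t))
      = (A.filter (fun j => v j < t)).card := by
    have h1 : (L : Multiset ℝ).countP (fun x => x < t)
        = L.countP (fun x => decide (x < t)) := Multiset.coe_countP _ _
    rw [← h1, hL, Multiset.sort_eq, Multiset.countP_map]
    rfl
  rw [hget, sorted_get_lt t L hsorted (k-1) hik, hcount]
  omega

lemma Zstat_plus_le (p : ℕ) (H0 : Finset (Fin p)) (g : Fin p → ℤ)
    (gp : Fin p → ℤ) (hgp : ∀ j, gp j = if j ∈ H0 then g j else 1) (j : Fin p) :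
    Zstat p gp j ≤ Zstat p g j := by
  apply Finset.card_le_card
  intro k hk
  simp only [Finset.mem_filter, Finset.mem_univ, true_and] at hk ⊢
  refine ⟨hk.1, ?_⟩
  have h2 := hk.2
  rw [hgp k] at h2
  by_cases hkH : k ∈ H0
  · rwa [if_pos hkH] at h2
  · rw [if_neg hkH] at h2; exact absurd h2 (by norm_num)

lemma piStat_plus_le (p : ℕ) (hp : 1 ≤ p) (H0 : Finset (Fin p)) (g : Fin p → ℤ)
    (gp : Fin p → ℤ) (hgp : ∀ j, gp j = if j ∈ H0 then g j else 1)
    (j : Fin p) (hj : j ∈ H0) :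
    piStat p gp j ≤ piStat p g j := by
  have hjval : gp j = g j := by rw [hgp j, if_pos hj]
  unfold piStat
  rw [hjval]
  by_cases h1 : g j = 1
  · rw [if_pos h1, if_pos h1]
    have hz := Zstat_plus_le p H0 g gp hgp j
    have hp' : (0:ℝ) < p := by exact_mod_cast hp
    have hz' : (Zstat p gp j : ℝ) ≤ Zstat p g j := by exact_mod_cast hz
    gcongr
  · rw [if_neg h1, if_neg h1]

/-- Monotonicity: the JER event for `g` implies the one for `g` with off-`H0`
coordinates replaced by `1`. -/
lemma Ppred_mono (p : ℕ) (hp : 1 ≤ p) (H0 : Finset (Fin p)) (kmax : ℕ) (t : ℕ → ℝ)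
    (g gp : Fin p → ℤ) (hgp : ∀ j, gp j = if j ∈ H0 then g j else 1)
    (hP : ∃ k, 1 ≤ k ∧ k ≤ min kmax H0.card ∧ orderStat H0 (piStat p g) k < t k) :
    ∃ k, 1 ≤ k ∧ k ≤ min kmax H0.card ∧ orderStat H0 (piStat p gp) k < t k := by
  classical
  obtain ⟨k, hk1, hk2, hlt⟩ := hP
  have hkc : k ≤ H0.card := le_trans hk2 (min_le_right _ _)
  refine ⟨k, hk1, hk2, ?_⟩
  rw [orderStat_lt_iff _ _ _ _ hk1 hkc] at hlt ⊢
  refine le_trans hlt (Finset.card_le_card ?_)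
  intro j hj
  simp only [Finset.mem_filter] at hj ⊢
  exact ⟨hj.1, lt_of_le_of_lt (piStat_plus_le p hp H0 g gp hgp j hj.1) hj.2⟩

open Finset in
lemma Zstat_emb_eq (p : ℕ) (H0 : Finset (Fin p)) (hle : H0.card ≤ p) (s h : Fin p → ℤ)
    (hh : ∀ (j : Fin p) (hj : (j : ℕ) < H0.card),
      h j = s ((H0.orderIsoOfFin rfl ⟨j.val, hj⟩ : {x // x ∈ H0}) : Fin p))
    (gp : Fin p → ℤ) (hgp : ∀ j, gp j = if j ∈ H0 then s j else 1)
    (i : Fin H0.card) :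
    Zstat p h ⟨i.val, lt_of_lt_of_le i.isLt hle⟩
      = Zstat p gp ((H0.orderIsoOfFin rfl i : {x // x ∈ H0}) : Fin p) := by
  classical
  set σ := H0.orderIsoOfFin rfl with hσ
  unfold Zstat
  have hmem : ∀ k ∈ Finset.univ.filter
      (fun k : Fin p => k < (⟨i.val, lt_of_lt_of_le i.isLt hle⟩ : Fin p) ∧ h k = -1),
      (k : ℕ) < H0.card := by
    intro k hk
    simp only [mem_filter, mem_univ, true_and, Fin.lt_def] at hk
    exact lt_trans hk.1 i.isLt
  refine Finset.card_bij (fun k hk => ((σ ⟨k.val, hmem k hk⟩ : {x // x ∈ H0}) : Fin p))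
    ?_ ?_ ?_
  · intro k hk
    have hk' := hk
    simp only [mem_filter, mem_univ, true_and, Fin.lt_def] at hk' ⊢
    constructor
    · exact Subtype.coe_lt_coe.mpr (σ.lt_iff_lt.mpr (by exact hk'.1))
    · rw [hgp, if_pos (σ ⟨k.val, hmem k hk⟩).2, ← hh k (hmem k hk)]
      exact hk'.2
  · intro k₁ hk₁ k₂ hk₂ heq
    have h1 : (⟨(k₁ : ℕ), hmem k₁ hk₁⟩ : Fin H0.card) = ⟨(k₂ : ℕ), hmem k₂ hk₂⟩ :=
      σ.injective (Subtype.coe_injective heq)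
    exact Fin.ext (congrArg (Fin.val : Fin H0.card → ℕ) h1)
  · intro b hb
    simp only [mem_filter, mem_univ, true_and] at hb
    have hbH : b ∈ H0 := by
      by_contra hbH
      rw [hgp, if_neg hbH] at hb
      exact absurd hb.2 (by norm_num)
    set i' := σ.symm ⟨b, hbH⟩ with hi'
    have hσi' : σ i' = ⟨b, hbH⟩ := σ.apply_symm_apply _
    have hi'lt : i' < i := by
      rw [← σ.lt_iff_lt, hσi']
      exact Subtype.coe_lt_coe.mp (by exact hb.1)
    refine ⟨⟨i'.val, lt_of_lt_of_le i'.isLt hle⟩, ?_, ?_⟩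
    · simp only [mem_filter, mem_univ, true_and, Fin.lt_def]
      refine ⟨hi'lt, ?_⟩
      rw [hh _ i'.isLt]
      have : (⟨i'.val, i'.isLt⟩ : Fin H0.card) = i' := Fin.ext rfl
      rw [this, hσi']
      have hb2 := hb.2
      rw [hgp, if_pos hbH] at hb2
      exact hb2
    · exact congrArg Subtype.val hσi'

lemma piStat_emb_eq (p : ℕ) (H0 : Finset (Fin p)) (hle : H0.card ≤ p) (s h : Fin p → ℤ)
    (hh : ∀ (j : Fin p) (hj : (j : ℕ) < H0.card),
      h j = s ((H0.orderIsoOfFin rfl ⟨j.val, hj⟩ : {x // x ∈ H0}) : Fin p))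
    (gp : Fin p → ℤ) (hgp : ∀ j, gp j = if j ∈ H0 then s j else 1)
    (i : Fin H0.card) :
    piStat p h ⟨i.val, lt_of_lt_of_le i.isLt hle⟩
      = piStat p gp ((H0.orderIsoOfFin rfl i : {x // x ∈ H0}) : Fin p) := by
  set σ := H0.orderIsoOfFin rfl with hσ
  have hval : h ⟨i.val, lt_of_lt_of_le i.isLt hle⟩
      = gp ((σ i : {x // x ∈ H0}) : Fin p) := by
    rw [hh _ i.isLt, hgp, if_pos (σ i).2]
  unfold piStat
  rw [hval, Zstat_emb_eq p H0 hle s h hh gp hgp i]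

open Finset in
lemma count_le (p : ℕ) (H0 : Finset (Fin p)) (hle : H0.card ≤ p) (s h : Fin p → ℤ)
    (hh : ∀ (j : Fin p) (hj : (j : ℕ) < H0.card),
      h j = s ((H0.orderIsoOfFin rfl ⟨j.val, hj⟩ : {x // x ∈ H0}) : Fin p))
    (gp : Fin p → ℤ) (hgp : ∀ j, gp j = if j ∈ H0 then s j else 1)
    (τ : ℝ) [DecidablePred fun j => piStat p gp j < τ]
    [DecidablePred fun j => piStat p h j < τ] :
    (H0.filter (fun j => piStat p gp j < τ)).card
      ≤ (Finset.univ.filter (fun j : Fin p => piStat p h j < τ)).card := by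
  classical
  set σ := H0.orderIsoOfFin rfl with hσ
  have step1 : (H0.filter (fun j => piStat p gp j < τ)).card
      = ((Finset.univ : Finset (Fin H0.card)).filter
          (fun i => piStat p gp ((σ i : {x // x ∈ H0}) : Fin p) < τ)).card := by
    refine (Finset.card_bij (fun i _ => ((σ i : {x // x ∈ H0}) : Fin p)) ?_ ?_ ?_).symm
    · intro i hi
      simp only [mem_filter, mem_univ, true_and] at hi ⊢
      exact ⟨(σ i).2, hi⟩
    · intro i₁ _ i₂ _ heq
      exact σ.injective (Subtype.coe_injective heq)
    · intro b hb
      simp only [mem_filter, mem_univ, true_and] at hb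
      refine ⟨σ.symm ⟨b, hb.1⟩, ?_, ?_⟩
      · simp only [mem_filter, mem_univ, true_and, σ.apply_symm_apply]
        exact hb.2
      · exact congrArg Subtype.val (σ.apply_symm_apply _)
  have step2 : ∀ i : Fin H0.card,
      piStat p gp ((σ i : {x // x ∈ H0}) : Fin p)
        = piStat p h ⟨i.val, lt_of_lt_of_le i.isLt hle⟩ :=
    fun i => (piStat_emb_eq p H0 hle s h hh gp hgp i).symm
  rw [step1]
  have step3 : ((Finset.univ : Finset (Fin H0.card)).filter
          (fun i => piStat p gp ((σ i : {x // x ∈ H0}) : Fin p) < τ)).card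
      = ((Finset.univ : Finset (Fin H0.card)).filter
          (fun i => piStat p h ⟨i.val, lt_of_lt_of_le i.isLt hle⟩ < τ)).card := by
    congr 1
    apply Finset.filter_congr
    intro i _
    rw [step2 i]
  rw [step3]
  apply Finset.card_le_card_of_injOn (fun i => (⟨i.val, lt_of_lt_of_le i.isLt hle⟩ : Fin p))
  · intro i hi
    simp only [Finset.mem_coe, mem_filter, mem_univ, true_and] at hi ⊢
    exact hi
  · intro i₁ _ i₂ _ heq
    exact Fin.ext (congrArg (Fin.val : Fin p → ℕ) heq)

end aux

section main

def Ppred (p : ℕ) (H0 : Finset (Fin p)) (kmax : ℕ) (t : ℕ → ℝ) (g : Fin p → ℤ) : Prop :=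
  ∃ k, 1 ≤ k ∧ k ≤ min kmax H0.card ∧ orderStat H0 (piStat p g) k < t k

def Qpred (p kmax : ℕ) (t : ℕ → ℝ) (g : Fin p → ℤ) : Prop :=
  ∃ k, 1 ≤ k ∧ k ≤ kmax ∧ orderStat Finset.univ (piStat p g) k < t k

def gplus (p : ℕ) (H0 : Finset (Fin p)) (s : Fin p → ℤ) : Fin p → ℤ :=
  fun j => if j ∈ H0 then s j else 1

noncomputable def embFun (p : ℕ) (H0 : Finset (Fin p)) (s u : Fin p → ℤ) : Fin p → ℤ :=
  fun j => if hj : (j : ℕ) < H0.card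
    then s ((H0.orderIsoOfFin rfl ⟨j.val, hj⟩ : {x // x ∈ H0}) : Fin p) else u j

lemma Ppred_imp_Qpred (p : ℕ) (H0 : Finset (Fin p)) (hle : H0.card ≤ p)
    (kmax : ℕ) (t : ℕ → ℝ) (s u : Fin p → ℤ)
    (hP : Ppred p H0 kmax t (gplus p H0 s)) :
    Qpred p kmax t (embFun p H0 s u) := by
  classical
  obtain ⟨k, hk1, hk2, hlt⟩ := hP
  have hkc : k ≤ H0.card := le_trans hk2 (min_le_right _ _)
  refine ⟨k, hk1, le_trans hk2 (min_le_left _ _), ?_⟩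
  have hkp : k ≤ (Finset.univ : Finset (Fin p)).card := by
    rw [Finset.card_univ, Fintype.card_fin]; omega
  rw [orderStat_lt_iff _ _ _ _ hk1 hkc] at hlt
  rw [orderStat_lt_iff _ _ _ _ hk1 hkp]
  refine le_trans hlt ?_
  exact count_le p H0 hle s (embFun p H0 s u)
    (fun j hj => dif_pos hj) (gplus p H0 s) (fun j => rfl) (t k)

def SignsOn (p : ℕ) (A : Finset (Fin p)) : Finset (Fin p → ℤ) :=
  Fintype.piFinset (fun j => if j ∈ A then ({1, -1} : Finset ℤ) else {1})

def Tails (p p0 : ℕ) : Finset (Fin p → ℤ) :=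
  Fintype.piFinset (fun j : Fin p => if p0 ≤ (j : ℕ) then ({1, -1} : Finset ℤ) else {1})

def AllSigns (p : ℕ) : Finset (Fin p → ℤ) :=
  Fintype.piFinset (fun _ : Fin p => ({1, -1} : Finset ℤ))

lemma mem_SignsOn {p : ℕ} {A : Finset (Fin p)} {s : Fin p → ℤ} (hs : s ∈ SignsOn p A) :
    (∀ j ∈ A, s j = 1 ∨ s j = -1) ∧ (∀ j ∉ A, s j = 1) := by
  rw [SignsOn, Fintype.mem_piFinset] at hs
  constructor
  · intro j hj; have := hs j; rw [if_pos hj] at this; simpa using this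
  · intro j hj; have := hs j; rw [if_neg hj] at this; simpa using this

lemma mem_Tails {p p0 : ℕ} {u : Fin p → ℤ} (hu : u ∈ Tails p p0) :
    (∀ j : Fin p, ¬ (j : ℕ) < p0 → u j = 1 ∨ u j = -1) ∧
      (∀ j : Fin p, (j : ℕ) < p0 → u j = 1) := by
  rw [Tails, Fintype.mem_piFinset] at hu
  constructor
  · intro j hj; have := hu j; rw [if_pos (not_lt.mp hj)] at this; simpa using this
  · intro j hj; have := hu j; rw [if_neg (not_le.mpr hj)] at this; simpa using this

open Classical Finset in
lemma card_Tails (p p0 : ℕ) (hle : p0 ≤ p) : (Tails p p0).card = 2 ^ (p - p0) := by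
  classical
  rw [Tails, Fintype.card_piFinset]
  have h1 : ∀ j : Fin p, (if p0 ≤ (j : ℕ) then ({1, -1} : Finset ℤ) else {1}).card
      = if p0 ≤ (j : ℕ) then 2 else 1 := by
    intro j; by_cases hj : p0 ≤ (j : ℕ) <;> simp [hj]
  rw [Finset.prod_congr rfl (fun j _ => h1 j), Finset.prod_ite, Finset.prod_const,
    Finset.prod_const, one_pow, mul_one]
  congr 1
  rw [← Nat.card_Ico p0 p]
  refine Finset.card_bij (fun j _ => (j : ℕ)) ?_ ?_ ?_
  · intro j hj
    simp only [mem_filter, mem_univ, true_and] at hj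
    exact Finset.mem_Ico.mpr ⟨hj, j.isLt⟩
  · intro j₁ _ j₂ _ h
    exact Fin.ext h
  · intro m hm
    rw [Finset.mem_Ico] at hm
    exact ⟨⟨m, hm.2⟩, by simp [hm.1], rfl⟩

open Finset in
lemma card_count_le (p : ℕ) (H0 : Finset (Fin p)) (hle : H0.card ≤ p)
    (kmax : ℕ) (t : ℕ → ℝ)
    [DecidablePred (fun s : Fin p → ℤ => Ppred p H0 kmax t (gplus p H0 s))]
    [DecidablePred (Qpred p kmax t)] :
    ((SignsOn p H0).filter (fun s => Ppred p H0 kmax t (gplus p H0 s))).card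
        * 2 ^ (p - H0.card)
      ≤ ((AllSigns p).filter (Qpred p kmax t)).card := by
  classical
  set σ := H0.orderIsoOfFin rfl with hσ
  rw [← card_Tails p H0.card hle, ← Finset.card_product]
  apply Finset.card_le_card_of_injOn (fun x => embFun p H0 x.1 x.2)
  · rintro ⟨s, u⟩ hx
    rw [Finset.mem_coe, Finset.mem_product, Finset.mem_filter] at hx
    obtain ⟨⟨hsS, hsP⟩, huT⟩ := hx
    rw [Finset.mem_coe, Finset.mem_filter]
    constructor
    · rw [AllSigns, Fintype.mem_piFinset]
      intro j
      by_cases hj : (j : ℕ) < H0.card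
      · have : embFun p H0 s u j = s ((σ ⟨j.val, hj⟩ : {x // x ∈ H0}) : Fin p) :=
          dif_pos hj
        simp only [this]
        rcases (mem_SignsOn hsS).1 _ (σ ⟨j.val, hj⟩).2 with h | h
        · exact Finset.mem_insert.mpr (Or.inl h)
        · exact Finset.mem_insert.mpr (Or.inr (Finset.mem_singleton.mpr h))
      · have : embFun p H0 s u j = u j := dif_neg hj
        simp only [this]
        rcases (mem_Tails huT).1 j hj with h | h
        · exact Finset.mem_insert.mpr (Or.inl h)
        · exact Finset.mem_insert.mpr (Or.inr (Finset.mem_singleton.mpr h))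
    · exact Ppred_imp_Qpred p H0 hle kmax t s u hsP
  · rintro ⟨s, u⟩ hx ⟨s', u'⟩ hx' heq
    simp only [Finset.mem_coe, Finset.mem_product, Finset.mem_filter] at hx hx'
    have hfun : ∀ j, embFun p H0 s u j = embFun p H0 s' u' j :=
      fun j => congrFun heq j
    have hs : s = s' := by
      funext j
      by_cases hj : j ∈ H0
      · set i := σ.symm ⟨j, hj⟩ with hi
        have hσi : σ i = ⟨j, hj⟩ := σ.apply_symm_apply _
        have hival : (i : ℕ) < H0.card := i.isLt
        have hkey := hfun ⟨i.val, lt_of_lt_of_le i.isLt hle⟩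
        rw [embFun, embFun, dif_pos hival, dif_pos hival] at hkey
        have hmk : (⟨(i : ℕ), hival⟩ : Fin H0.card) = i := Fin.ext rfl
        rw [hmk, hσi] at hkey
        exact hkey
      · rw [(mem_SignsOn hx.1.1).2 j hj, (mem_SignsOn hx'.1.1).2 j hj]
    have hu : u = u' := by
      funext j
      by_cases hj : (j : ℕ) < H0.card
      · rw [(mem_Tails hx.2).2 j hj, (mem_Tails hx'.2).2 j hj]
      · have hkey := hfun j
        rw [embFun, embFun, dif_neg hj, dif_neg hj] at hkey
        exact hkey
    rw [Prod.mk.injEq]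
    exact ⟨hs, hu⟩

end main

/-- Theorem 1 (JER bound for π statistics). Let `p ≥ 1` and `H0 ⊆ {1,…,p}` be nonempty with
`|H0| = p0`. Let `χ` be a random sign vector such that `(χ_j)_{j∈H0}` is i.i.d. uniform on
`{−1,1}` and independent of `(χ_j)_{j∉H0}` (encoded by `hχlaw`), with associated π statistics;
independently, let `χ⁰` be i.i.d. uniform on `{−1,1}^p` with associated `π⁰` statistics.
Then for every threshold family `0 ≤ t_1 ≤ ⋯ ≤ t_kmax ≤ 1`,
`ℙ(∃ k ≤ min(kmax, p0) : π_{(k:H0)} < t_k) ≤ ℙ(∃ k ≤ kmax : π⁰_{(k)} < t_k)`. -/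
theorem JER_le_JER0
    {Ω : Type*} [MeasurableSpace Ω] (μ : Measure Ω) [IsProbabilityMeasure μ]
    (p : ℕ) (hp : 1 ≤ p) (H0 : Finset (Fin p)) (hH0 : H0.Nonempty)
    (χ χ0 : Ω → Fin p → ℤ) (hχm : Measurable χ) (hχ0m : Measurable χ0)
    (hχval : ∀ ω j, χ ω j = 1 ∨ χ ω j = -1)
    (hχ0val : ∀ ω j, χ0 ω j = 1 ∨ χ0 ω j = -1)
    -- `(χ_j)_{j∈H0}` is i.i.d. uniform on `{−1,1}` and independent of `(χ_j)_{j∉H0}`: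
    (hχlaw : ∀ (s : Fin p → ℤ), (∀ j ∈ H0, s j = 1 ∨ s j = -1) →
      ∀ (E : Set (Fin p → ℤ)), MeasurableSet E →
      (∀ f g : Fin p → ℤ, (∀ j ∉ H0, f j = g j) → (f ∈ E ↔ g ∈ E)) →
      μ {ω | (∀ j ∈ H0, χ ω j = s j) ∧ χ ω ∈ E}
        = (1 / 2 : ENNReal) ^ H0.card * μ {ω | χ ω ∈ E})
    -- `χ⁰` is i.i.d. uniform on `{−1,1}^p`:
    (hχ0law : ∀ s : Fin p → ℤ, (∀ j, s j = 1 ∨ s j = -1) →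
      μ {ω | χ0 ω = s} = (1 / 2 : ENNReal) ^ p)
    -- `χ⁰` is independent of `χ`:
    (hindep : IndepFun χ χ0 μ)
    -- threshold family `t` of size `kmax`:
    (kmax : ℕ) (hkmax : 1 ≤ kmax) (t : ℕ → ℝ) (ht0 : 0 ≤ t 1)
    (htmono : ∀ j k, 1 ≤ j → j ≤ k → k ≤ kmax → t j ≤ t k) (ht1 : t kmax ≤ 1) :
    μ {ω | ∃ k, 1 ≤ k ∧ k ≤ min kmax H0.card ∧
        orderStat H0 (piStat p (χ ω)) k < t k}
      ≤ μ {ω | ∃ k, 1 ≤ k ∧ k ≤ kmax ∧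
        orderStat Finset.univ (piStat p (χ0 ω)) k < t k} := by
  classical
  have hle : H0.card ≤ p := by
    have h := Finset.card_le_univ H0
    simpa using h
  have hmeasE : ∀ (E : Set (Fin p → ℤ)), MeasurableSet E :=
    fun E => (Set.to_countable E).measurableSet
  show μ {ω | Ppred p H0 kmax t (χ ω)} ≤ μ {ω | Qpred p kmax t (χ0 ω)}
  -- the override function
  set ov : (Fin p → ℤ) → (Fin p → ℤ) → (Fin p → ℤ) :=
    fun s g j => if j ∈ H0 then s j else g j with hov
  -- Step 1 : decompose the LHS over sign patterns on H0
  have hcover : {ω | Ppred p H0 kmax t (χ ω)}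
      = ⋃ s ∈ SignsOn p H0,
          ({ω | ∀ j ∈ H0, χ ω j = s j} ∩ {ω | Ppred p H0 kmax t (χ ω)}) := by
    ext ω
    simp only [Set.mem_iUnion, Set.mem_inter_iff, Set.mem_setOf_eq]
    constructor
    · intro hω
      refine ⟨fun j => if j ∈ H0 then χ ω j else 1, ?_, ?_, hω⟩
      · rw [SignsOn, Fintype.mem_piFinset]
        intro j
        by_cases hj : j ∈ H0
        · rw [if_pos hj, if_pos hj]
          rcases hχval ω j with h | h
          · exact Finset.mem_insert.mpr (Or.inl h)
          · exact Finset.mem_insert.mpr (Or.inr (Finset.mem_singleton.mpr h))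
        · rw [if_neg hj, if_neg hj]
          exact Finset.mem_singleton.mpr rfl
      · intro j hj
        exact (if_pos hj).symm
    · rintro ⟨s, _, _, h⟩
      exact h
  have hdisj : (SignsOn p H0 : Set (Fin p → ℤ)).PairwiseDisjoint
      (fun s => {ω | ∀ j ∈ H0, χ ω j = s j} ∩ {ω | Ppred p H0 kmax t (χ ω)}) := by
    intro s hs s' hs' hne
    simp only [Function.onFun]
    rw [Set.disjoint_left]
    rintro ω ⟨h1, _⟩ ⟨h1', _⟩
    apply hne
    funext j
    by_cases hj : j ∈ H0
    · rw [← h1 j hj, h1' j hj]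
    · rw [(mem_SignsOn hs).2 j hj, (mem_SignsOn hs').2 j hj]
  have hmeas : ∀ s ∈ SignsOn p H0, MeasurableSet
      ({ω | ∀ j ∈ H0, χ ω j = s j} ∩ {ω | Ppred p H0 kmax t (χ ω)}) := by
    intro s _
    exact MeasurableSet.inter (hχm (hmeasE {g | ∀ j ∈ H0, g j = s j}))
      (hχm (hmeasE {g | Ppred p H0 kmax t g}))
  have hstep1 : μ {ω | Ppred p H0 kmax t (χ ω)}
      = ∑ s ∈ SignsOn p H0,
          μ ({ω | ∀ j ∈ H0, χ ω j = s j} ∩ {ω | Ppred p H0 kmax t (χ ω)}) := by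
    have h := measure_biUnion_finset (μ := μ) hdisj hmeas
    rw [← hcover] at h
    exact h
  -- Step 2 : bound each term
  have hterm : ∀ s ∈ SignsOn p H0,
      μ ({ω | ∀ j ∈ H0, χ ω j = s j} ∩ {ω | Ppred p H0 kmax t (χ ω)})
        ≤ if Ppred p H0 kmax t (gplus p H0 s) then (1/2 : ENNReal) ^ H0.card else 0 := by
    intro s hs
    have hmatch : {ω | ∀ j ∈ H0, χ ω j = s j} ∩ {ω | Ppred p H0 kmax t (χ ω)}
        = {ω | (∀ j ∈ H0, χ ω j = s j) ∧ χ ω ∈ {g | Ppred p H0 kmax t (ov s g)}} := by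
      ext ω
      simp only [Set.mem_inter_iff, Set.mem_setOf_eq]
      have hov_eq : ∀ (h1 : ∀ j ∈ H0, χ ω j = s j), ov s (χ ω) = χ ω := by
        intro h1
        funext j
        by_cases hj : j ∈ H0
        · rw [hov]; simp only [if_pos hj]; exact (h1 j hj).symm
        · rw [hov]; simp only [if_neg hj]
      constructor
      · rintro ⟨h1, h2⟩
        exact ⟨h1, by rw [hov_eq h1]; exact h2⟩
      · rintro ⟨h1, h2⟩
        refine ⟨h1, ?_⟩
        rw [← hov_eq h1]
        exact h2
    have hinv : ∀ f g : Fin p → ℤ, (∀ j ∉ H0, f j = g j) →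
        (f ∈ {g | Ppred p H0 kmax t (ov s g)} ↔ g ∈ {g | Ppred p H0 kmax t (ov s g)}) := by
      intro f g hfg
      have : ov s f = ov s g := by
        funext j
        by_cases hj : j ∈ H0
        · rw [hov]; simp only [if_pos hj]
        · rw [hov]; simp only [if_neg hj]; exact hfg j hj
      simp only [Set.mem_setOf_eq, this]
    rw [hmatch, hχlaw s (mem_SignsOn hs).1 _ (hmeasE _) hinv]
    by_cases hPg : Ppred p H0 kmax t (gplus p H0 s)
    · rw [if_pos hPg]
      calc (1/2 : ENNReal) ^ H0.card * μ {ω | χ ω ∈ {g | Ppred p H0 kmax t (ov s g)}}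
          ≤ (1/2 : ENNReal) ^ H0.card * 1 := mul_le_mul_right prob_le_one _
        _ = (1/2 : ENNReal) ^ H0.card := mul_one _
    · rw [if_neg hPg]
      have hempty : {ω | χ ω ∈ {g | Ppred p H0 kmax t (ov s g)}} = ∅ := by
        ext ω
        simp only [Set.mem_setOf_eq, Set.mem_empty_iff_false, iff_false]
        intro hω
        apply hPg
        refine Ppred_mono p hp H0 kmax t (ov s (χ ω)) (gplus p H0 s) ?_ hω
        intro j
        by_cases hj : j ∈ H0
        · rw [gplus, hov]; simp only [if_pos hj]
        · rw [gplus, hov]; simp only [if_neg hj]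
      rw [hempty, measure_empty, mul_zero]
  -- Step 3 : LHS bounded by counting
  have hLHS : μ {ω | Ppred p H0 kmax t (χ ω)}
      ≤ (((SignsOn p H0).filter (fun s => Ppred p H0 kmax t (gplus p H0 s))).card : ENNReal)
          * (1/2 : ENNReal) ^ H0.card := by
    rw [hstep1]
    refine le_trans (Finset.sum_le_sum hterm) ?_
    rw [← Finset.sum_filter, Finset.sum_const, nsmul_eq_mul]
  -- Step 4 : RHS bounded below by counting
  have hRHS : (((AllSigns p).filter (Qpred p kmax t)).card : ENNReal) * (1/2 : ENNReal) ^ p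
      ≤ μ {ω | Qpred p kmax t (χ0 ω)} := by
    have hsub : (⋃ h ∈ (AllSigns p).filter (Qpred p kmax t), {ω | χ0 ω = h})
        ⊆ {ω | Qpred p kmax t (χ0 ω)} := by
      intro ω hω
      simp only [Set.mem_iUnion, Set.mem_setOf_eq] at hω ⊢
      obtain ⟨h, hh, hωh⟩ := hω
      rw [Finset.mem_filter] at hh
      rw [hωh]
      exact hh.2
    have hdisj0 : ((AllSigns p).filter (Qpred p kmax t) : Set (Fin p → ℤ)).PairwiseDisjoint
        (fun h => {ω | χ0 ω = h}) := by
      intro h1 hh1 h2 hh2 hne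
      simp only [Function.onFun]
      rw [Set.disjoint_left]
      rintro ω hω1 hω2
      simp only [Set.mem_setOf_eq] at hω1 hω2
      exact hne (hω1 ▸ hω2 ▸ rfl)
    have hmeas0 : ∀ h ∈ (AllSigns p).filter (Qpred p kmax t),
        MeasurableSet {ω | χ0 ω = h} := fun h _ => hχ0m (hmeasE {h})
    calc (((AllSigns p).filter (Qpred p kmax t)).card : ENNReal) * (1/2 : ENNReal) ^ p
        = ∑ h ∈ (AllSigns p).filter (Qpred p kmax t), μ {ω | χ0 ω = h} := by
          rw [Finset.sum_congr rfl (fun h hh => hχ0law h (fun j => by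
            have := (Finset.mem_filter.mp hh).1
            rw [AllSigns, Fintype.mem_piFinset] at this
            have hj := this j
            rcases Finset.mem_insert.mp hj with h' | h'
            · exact Or.inl h'
            · exact Or.inr (Finset.mem_singleton.mp h')))]
          rw [Finset.sum_const, nsmul_eq_mul]
      _ = μ (⋃ h ∈ (AllSigns p).filter (Qpred p kmax t), {ω | χ0 ω = h}) :=
          (measure_biUnion_finset hdisj0 hmeas0).symm
      _ ≤ μ {ω | Qpred p kmax t (χ0 ω)} := measure_mono hsub
  -- Step 5 : combine with the counting inequality
  refine le_trans hLHS (le_trans ?_ hRHS)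
  have hcount := card_count_le p H0 hle kmax t
  have htwo : (2 : ENNReal) * (1/2) = 1 := by
    rw [one_div, ENNReal.mul_inv_cancel] <;> norm_num
  have hadd : p - H0.card + H0.card = p := by omega
  have h1 : (1/2 : ENNReal) ^ H0.card = 2 ^ (p - H0.card) * (1/2 : ENNReal) ^ p := by
    calc (1/2 : ENNReal) ^ H0.card = 1 * (1/2 : ENNReal) ^ H0.card := (one_mul _).symm
      _ = ((2 : ENNReal) * (1/2)) ^ (p - H0.card) * (1/2 : ENNReal) ^ H0.card := by
          rw [htwo, one_pow]
      _ = (2 : ENNReal) ^ (p - H0.card) * (1/2 : ENNReal) ^ (p - H0.card)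
            * (1/2 : ENNReal) ^ H0.card := by rw [mul_pow]
      _ = (2 : ENNReal) ^ (p - H0.card)
            * ((1/2 : ENNReal) ^ (p - H0.card) * (1/2 : ENNReal) ^ H0.card) := mul_assoc _ _ _
      _ = 2 ^ (p - H0.card) * (1/2 : ENNReal) ^ p := by rw [← pow_add, hadd]
  rw [h1, ← mul_assoc]
  apply mul_le_mul_left
  calc (((SignsOn p H0).filter (fun s => Ppred p H0 kmax t (gplus p H0 s))).card : ENNReal)
        * 2 ^ (p - H0.card)
      = ((((SignsOn p H0).filter (fun s => Ppred p H0 kmax t (gplus p H0 s))).card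
          * 2 ^ (p - H0.card) : ℕ) : ENNReal) := by push_cast; ring
    _ ≤ (((AllSigns p).filter (Qpred p kmax t)).card : ENNReal) := by exact_mod_cast hcount
end

section
/- Let p ≥ 1, let π = (π_1,…,π_p) be a random vector in ℝ^p, let H0 ⊆ {1,…,p} be nonempty with |H0| = p0, let α ∈ (0,1), and let t = (t_1,…,t_{kmax}) be a threshold family such that ℙ(∃ k ∈ {1,…, min(kmax, p0)} : π_{(k:H0)} < t_k) ≤ α. For S ⊆ {1,…,p} define V^t(S) = min_{1 ≤ k ≤ kmax} [(k − 1) + |{i ∈ S : π_i ≥ t_k}|]. Then ℙ(for all S ⊆ {1,…,p}: |S ∩ H0| ≤ V^t(S)) ≥ 1 − α; in particular, with probability at least 1 − α, simultaneously over all S, the false discovery proportion FDP(S) = |S ∩ H0| / max(|S|, 1) satisfies FDP(S) ≤ V^t(S)/max(|S|,1). -/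
open MeasureTheory

/-- The post hoc bound `V^t(S) = min_{1 ≤ k ≤ kmax} [(k − 1) + |{i ∈ S : π_i ≥ t_k}|]`. -/
noncomputable def Vbound (p kmax : ℕ) (hkmax : 1 ≤ kmax) (t : ℕ → ℝ)
    (π : Fin p → ℝ) (S : Finset (Fin p)) : ℕ :=
  (Finset.Icc 1 kmax).inf' (Finset.nonempty_Icc.mpr hkmax)
    (fun k => (k - 1) + (S.filter (fun i => t k ≤ π i)).card)

/-- In a sorted list, if the `(k-1)`-indexed element is `≥ c`, then at most `k-1`
elements are `< c`. -/
lemma sorted_count_le_of_getD {l : List ℝ} (hs : l.Pairwise (· ≤ ·)) {k : ℕ} {c : ℝ}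
    (hk1 : 1 ≤ k) (hk2 : k ≤ l.length) (hge : c ≤ l.getD (k - 1) 0) :
    (l.filter (fun x => decide (x < c))).length ≤ k - 1 := by
  have hlt : k - 1 < l.length := lt_of_lt_of_le (Nat.sub_lt hk1 one_pos) hk2
  rw [List.getD_eq_getElem l 0 hlt] at hge
  have hsplit : l = l.take (k - 1) ++ l.drop (k - 1) := (List.take_append_drop _ _).symm
  have hcount : (l.filter (fun x => decide (x < c))).length
      = List.countP (fun x => decide (x < c)) (l.take (k - 1))
        + List.countP (fun x => decide (x < c)) (l.drop (k - 1)) := by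
    conv_lhs => rw [hsplit]
    rw [← List.countP_eq_length_filter, List.countP_append]
  have hdrop : List.countP (fun x => decide (x < c)) (l.drop (k - 1)) = 0 := by
    rw [List.countP_eq_zero]
    intro a ha
    simp only [decide_eq_true_eq]
    obtain ⟨i, hi, rfl⟩ := List.mem_iff_getElem.mp ha
    rw [List.getElem_drop]
    have hidx : k - 1 + i < l.length := by
      have := hi; rw [List.length_drop] at this; omega
    have hle : l[k - 1] ≤ l[k - 1 + i] := by
      have := hs.rel_get_of_le
        (a := ⟨k - 1, hlt⟩) (b := ⟨k - 1 + i, hidx⟩) (Nat.le_add_right _ _)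
      simpa using this
    exact not_lt.mpr (le_trans hge hle)
  calc (l.filter (fun x => decide (x < c))).length
      = List.countP (fun x => decide (x < c)) (l.take (k - 1)) := by rw [hcount, hdrop]; ring
    _ ≤ (l.take (k - 1)).length := by
        rw [List.countP_eq_length_filter]; exact List.length_filter_le _ _
    _ ≤ k - 1 := by rw [List.length_take]; exact min_le_left _ _

/-- If the `k`-th order statistic over `A` is `≥ c`, then at most `k-1` indices in `A`
have value `< c`. -/
lemma count_le_of_orderStat_ge {ι : Type*} (A : Finset ι) (v : ι → ℝ) (k : ℕ) (c : ℝ)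
    (hk1 : 1 ≤ k) (hk2 : k ≤ A.card) (h : c ≤ orderStat A v k) :
    (A.filter (fun i => v i < c)).card ≤ k - 1 := by
  set l : List ℝ := Multiset.sort (A.val.map v) (· ≤ ·) with hl
  have hlen : l.length = A.card := by
    rw [hl, Multiset.length_sort, Multiset.card_map]; rfl
  have hsorted : l.Pairwise (· ≤ ·) := Multiset.pairwise_sort _ _
  have hmain := sorted_count_le_of_getD hsorted hk1 (hlen ▸ hk2) h
  have hcardeq : (A.filter (fun i => v i < c)).card
      = (l.filter (fun x => decide (x < c))).length := by
    have h1 : (↑(l.filter (fun x => decide (x < c))) : Multiset ℝ)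
        = Multiset.filter (fun x => x < c) ↑l := (Multiset.filter_coe _ _).symm
    have h2 : (↑l : Multiset ℝ) = A.val.map v := Multiset.sort_eq _ _
    have h3 : Multiset.filter (fun x => x < c) (A.val.map v)
        = (Multiset.filter (fun i => v i < c) A.val).map v := by
      rw [Multiset.filter_map]; rfl
    have : Multiset.card (↑(l.filter (fun x => decide (x < c))) : Multiset ℝ)
        = Multiset.card ((Multiset.filter (fun i => v i < c) A.val).map v) := by
      rw [h1, h2, h3]
    simpa [Finset.card, Finset.filter_val] using this.symm
  omega

/-- The deterministic core: if no JER violation occurs, then every `S` satisfies the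
post hoc bound. -/
lemma vbound_of_no_jer (p kmax : ℕ) (hkmax : 1 ≤ kmax) (t : ℕ → ℝ)
    (htmono : ∀ j k, 1 ≤ j → j ≤ k → k ≤ kmax → t j ≤ t k)
    (H0 : Finset (Fin p)) (hH0 : H0.Nonempty) (v : Fin p → ℝ)
    (hnj : ∀ k, 1 ≤ k → k ≤ min kmax H0.card → ¬ orderStat H0 v k < t k)
    (S : Finset (Fin p)) :
    (S ∩ H0).card ≤ Vbound p kmax hkmax t v S := by
  apply Finset.le_inf'
  intro k hk
  rw [Finset.mem_Icc] at hk
  obtain ⟨hk1, hk2⟩ := hk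
  by_cases hkp : k ≤ H0.card
  · -- use the order statistic bound for threshold t k
    have hnolt : t k ≤ orderStat H0 v k := by
      have := hnj k hk1 (le_min hk2 hkp)
      linarith [not_lt.mp this]
    have hcount : (H0.filter (fun i => v i < t k)).card ≤ k - 1 :=
      count_le_of_orderStat_ge H0 v k (t k) hk1 hkp hnolt
    have hsub : ((S ∩ H0).filter (fun i => v i < t k)).card
        ≤ (H0.filter (fun i => v i < t k)).card :=
      Finset.card_le_card (Finset.filter_subset_filter _ Finset.inter_subset_right)
    have hsplit : ((S ∩ H0).filter (fun i => v i < t k)).card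
        + ((S ∩ H0).filter (fun i => ¬ v i < t k)).card = (S ∩ H0).card :=
      Finset.card_filter_add_card_filter_not _
    have hge : ((S ∩ H0).filter (fun i => ¬ v i < t k)).card
        ≤ (S.filter (fun i => t k ≤ v i)).card := by
      apply Finset.card_le_card
      intro i hi
      rw [Finset.mem_filter] at hi ⊢
      exact ⟨Finset.inter_subset_left hi.1, not_lt.mp hi.2⟩
    omega
  · -- trivial case: k > |H0|
    have : (S ∩ H0).card ≤ H0.card := Finset.card_le_card Finset.inter_subset_right
    omega

/-- Proposition 1 (FDP control via JER control). Let `π` be a random vector in `ℝ^p`,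
`H0 ⊆ {1,…,p}` nonempty with `|H0| = p0`, `α ∈ (0,1)`, and a threshold family `t` such that
`ℙ(∃ k ∈ {1,…,min(kmax,p0)} : π_{(k:H0)} < t_k) ≤ α`. Then with probability at least `1 − α`,
simultaneously over all `S ⊆ {1,…,p}`, `|S ∩ H0| ≤ V^t(S)` and
`FDP(S) = |S ∩ H0|/max(|S|,1) ≤ V^t(S)/max(|S|,1)`. -/
theorem fdp_control_via_jer_control
    {Ω : Type*} [MeasurableSpace Ω] (μ : Measure Ω) [IsProbabilityMeasure μ]
    (p : ℕ) (hp : 1 ≤ p) (π : Ω → Fin p → ℝ) (hπ : Measurable π)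
    (H0 : Finset (Fin p)) (hH0 : H0.Nonempty)
    (α : ℝ) (hα0 : 0 < α) (hα1 : α < 1)
    (kmax : ℕ) (hkmax : 1 ≤ kmax) (t : ℕ → ℝ) (ht0 : 0 ≤ t 1)
    (htmono : ∀ j k, 1 ≤ j → j ≤ k → k ≤ kmax → t j ≤ t k) (ht1 : t kmax ≤ 1)
    (hjer : μ {ω | ∃ k, 1 ≤ k ∧ k ≤ min kmax H0.card ∧
        orderStat H0 (π ω) k < t k} ≤ ENNReal.ofReal α) :
    1 - ENNReal.ofReal α ≤
      μ {ω | ∀ S : Finset (Fin p),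
        (S ∩ H0).card ≤ Vbound p kmax hkmax t (π ω) S ∧
        ((S ∩ H0).card : ℝ) / max (S.card : ℝ) 1
          ≤ (Vbound p kmax hkmax t (π ω) S : ℝ) / max (S.card : ℝ) 1} := by
  set G := {ω | ∀ S : Finset (Fin p),
        (S ∩ H0).card ≤ Vbound p kmax hkmax t (π ω) S ∧
        ((S ∩ H0).card : ℝ) / max (S.card : ℝ) 1
          ≤ (Vbound p kmax hkmax t (π ω) S : ℝ) / max (S.card : ℝ) 1} with hG
  set B := {ω | ∃ k, 1 ≤ k ∧ k ≤ min kmax H0.card ∧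
        orderStat H0 (π ω) k < t k} with hB
  have hsub : Bᶜ ⊆ G := by
    intro ω hω
    simp only [hB, Set.mem_compl_iff, Set.mem_setOf_eq, not_exists] at hω
    intro S
    have hnj : ∀ k, 1 ≤ k → k ≤ min kmax H0.card → ¬ orderStat H0 (π ω) k < t k := by
      intro k h1 h2 hlt
      exact hω k ⟨h1, h2, hlt⟩
    have hcard := vbound_of_no_jer p kmax hkmax t htmono H0 hH0 (π ω) hnj S
    refine ⟨hcard, ?_⟩
    have hpos : (0:ℝ) < max (S.card : ℝ) 1 := lt_max_of_lt_right one_pos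
    exact div_le_div_of_nonneg_right (by exact_mod_cast hcard) hpos.le
  have h1 : (1 : ENNReal) ≤ μ G + ENNReal.ofReal α := by
    calc (1 : ENNReal) = μ Set.univ := (measure_univ).symm
      _ ≤ μ (G ∪ B) := by
          apply measure_mono; intro ω _
          by_cases h : ω ∈ B
          · exact Or.inr h
          · exact Or.inl (hsub h)
      _ ≤ μ G + μ B := measure_union_le _ _
      _ ≤ μ G + ENNReal.ofReal α := by gcongr
  exact tsub_le_iff_right.mpr h1
end

section
/- Fix D ≥ 1 and a measurable aggregation function f : ℝ^D → ℝ. Let π̄^0 be the random vector in ℝ^p obtained by drawing D independent copies π^{0,1},…,π^{0,D} of a random vector π^0 in ℝ^p and setting π̄^0_j =ف f(π^{0,1}_j,…,π^{0,D}_j) for each j ∈ {1,…,p}. Let T̄(1),…,T̄(B') be fixed threshold families of size kmax, let α ∈ (0,1), and let π̄^0_1,…,π̄^0_B be i.i.d. copies of π̄^0. For each b', let J̄ER^0(T̄(b')) = ℙ(∃ k : π̄^0_{(k)} < T̄(b')_k) and let the empirical aggregated JER of T̄(b') be (1/B) Σ_{b=1}^B 1{∃ k : π̄^0_{b,(k)}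 < T̄(b')_k}. Define t̂ = T̄(λ) where λ is the largest b' ∈ {1,…,B'} whose empirical aggregated JER is at most α, on the event that such b' exists. Then for every M > 0, ℙ(λ exists and J̄ER^0(t̂) > α + M/√B) ≤ B'/(4M²). -/
open MeasureTheory ProbabilityTheory

/-- The JER violation event for a vector `v ∈ ℝ^p` and a threshold family `t` of size `kmax`. -/
def jerEvent (p kmax : ℕ) (t : ℕ → ℝ) (v : Fin p → ℝ) : Prop :=
  ∃ k, 1 ≤ k ∧ k ≤ kmax ∧ orderStat Finset.univ v k < t k

open Classical in
/-- Indicator of the JER violation event. -/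
noncomputable def jerInd (p kmax : ℕ) (t : ℕ → ℝ) (v : Fin p → ℝ) : ℝ :=
  if jerEvent p kmax t v then 1 else 0

/-- Coordinatewise aggregation: `π̄_j = f(π¹_j, …, π^D_j)`. -/
def aggregate {p D : ℕ} (f : (Fin D → ℝ) → ℝ) (π : Fin D → Fin p → ℝ) : Fin p → ℝ :=
  fun j => f (fun d => π d j)

lemma sorted_getD_lt_iff (c : ℝ) : ∀ (l : List ℝ), l.Pairwise (· ≤ ·) →
    ∀ i, i < l.length → (l.getD i 0 < c ↔ i < (l.filter (fun x => decide (x < c))).length)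
  | [], _, i, hi => by simp at hi
  | a :: t, hs, i, hi => by
    have hst : t.Pairwise (· ≤ ·) := hs.of_cons
    by_cases hac : a < c
    · have hf : (a :: t).filter (fun x => decide (x < c)) =
        a :: t.filter (fun x => decide (x < c)) := by simp [List.filter_cons, hac]
      rw [hf]
      cases i with
      | zero => simpa using hac
      | succ j =>
        have hj : j < t.length := by simpa using hi
        simpa using sorted_getD_lt_iff c t hst j hj
    · have hall : ∀ x ∈ t, ¬ x < c := fun x hx hxc =>
        hac (lt_of_le_of_lt ((List.pairwise_cons.mp hs).1 x hx) hxc)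
      have hf : (a :: t).filter (fun x => decide (x < c)) = [] := by
        simp only [List.filter_eq_nil_iff]
        intro x hx
        rcases List.mem_cons.mp hx with rfl | hx
        · simpa using hac
        · simpa using hall x hx
      rw [hf]
      simp only [List.length_nil, Nat.not_lt_zero, iff_false, not_lt]
      cases i with
      | zero => simpa using not_lt.mp hac
      | succ j =>
        have hj : j < t.length := by simpa using hi
        have : t.getD j 0 ∈ t := by
          rw [List.getD_eq_getElem _ _ hj]; exact List.getElem_mem hj
        exact not_lt.mp (hall _ this)

open Classical in
lemma orderStat_lt_iff_s13 {p : ℕ} (v : Fin p → ℝ) {k : ℕ} (hk1 : 1 ≤ k) (hkp : k ≤ p) (c : ℝ) :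
    orderStat Finset.univ v k < c ↔
      k ≤ (Finset.univ.filter (fun j => v j < c)).card := by
  classical
  set m : Multiset ℝ := (Finset.univ.val.map v) with hm
  set l : List ℝ := Multiset.sort m (· ≤ ·) with hl
  have hlen : l.length = p := by
    simp [hl, hm]
  have hsort : l.Pairwise (· ≤ ·) := Multiset.pairwise_sort _ _
  have hi : k - 1 < l.length := by omega
  have h1 := sorted_getD_lt_iff c l hsort (k - 1) hi
  have h2 : (l.filter (fun x => decide (x < c))).length
      = (Finset.univ.filter (fun j => v j < c)).card := by
    have hcoe : (l : Multiset ℝ) = m := Multiset.sort_eq _ _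
    have : ((l.filter (fun x => decide (x < c))) : Multiset ℝ)
        = Multiset.filter (fun x => x < c) m := by
      rw [← hcoe]
      simp [Multiset.filter_coe]
    have hcard : (l.filter (fun x => decide (x < c))).length
        = Multiset.card (Multiset.filter (fun x => x < c) m) := by
      rw [← this]; simp
    rw [hcard, hm, ← Multiset.countP_eq_card_filter, Multiset.countP_map]
    rw [Finset.card_def, Finset.filter_val]
  rw [orderStat]
  rw [h1, h2]
  omega

lemma orderStat_eq_zero {p : ℕ} (v : Fin p → ℝ) {k : ℕ} (hk : p < k) :
    orderStat Finset.univ v k = 0 := by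
  rw [orderStat]
  apply List.getD_eq_default
  simp only [Multiset.length_sort, Multiset.card_map]
  simpa using by omega

open Classical in
lemma measurableSet_jerEvent (p kmax : ℕ) (t : ℕ → ℝ) :
    MeasurableSet {v : Fin p → ℝ | jerEvent p kmax t v} := by
  classical
  have hset : {v : Fin p → ℝ | jerEvent p kmax t v}
      = ⋃ k ∈ Finset.Icc 1 kmax, {v : Fin p → ℝ | orderStat Finset.univ v k < t k} := by
    ext v
    simp [jerEvent, Finset.mem_Icc, and_assoc]
  rw [hset]
  refine MeasurableSet.biUnion (Finset.Icc 1 kmax).countable_toSet (fun k hk => ?_)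
  rcases le_or_gt k p with hkp | hkp
  · have hk1 : 1 ≤ k := (Finset.mem_Icc.mp hk).1
    have hchar : {v : Fin p → ℝ | orderStat Finset.univ v k < t k}
        = (fun v : Fin p → ℝ => ∑ j : Fin p, if v j < t k then 1 else 0) ⁻¹' (Set.Ici k) := by
      ext v
      rw [Set.mem_setOf_eq, orderStat_lt_iff_s13 v hk1 hkp (t k), Finset.card_filter]
      simp only [Set.mem_preimage, Set.mem_Ici]
    rw [hchar]
    have hF : Measurable (fun v : Fin p → ℝ => ∑ j : Fin p, if v j < t k then 1 else 0) := by
      apply Finset.measurable_sum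
      intro j _
      exact Measurable.ite (measurableSet_lt (measurable_pi_apply j) measurable_const)
        measurable_const measurable_const
    exact hF measurableSet_Ici
  · have hzero : ∀ v : Fin p → ℝ, orderStat Finset.univ v k = 0 :=
      fun v => orderStat_eq_zero v hkp
    by_cases h : (0:ℝ) < t k
    · have : {v : Fin p → ℝ | orderStat Finset.univ v k < t k} = Set.univ := by
        ext v; simp [hzero v, h]
      rw [this]; exact MeasurableSet.univ
    · have : {v : Fin p → ℝ | orderStat Finset.univ v k < t k} = ∅ := by
        ext v; simp [hzero v, h]
      rw [this]; exact MeasurableSet.empty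

lemma measurable_jerInd (p kmax : ℕ) (t : ℕ → ℝ) :
    Measurable (fun v : Fin p → ℝ => jerInd p kmax t v) := by
  unfold jerInd
  exact Measurable.ite (measurableSet_jerEvent p kmax t) measurable_const measurable_const

lemma measurable_aggregate {p D : ℕ} {f : (Fin D → ℝ) → ℝ} (hf : Measurable f) :
    Measurable (fun π : Fin D → Fin p → ℝ => aggregate f π) :=
  measurable_pi_lambda _ (fun j => hf.comp (measurable_pi_lambda _
    (fun d => (measurable_pi_apply j).comp (measurable_pi_apply d))))

lemma block_map_eq_pi {Ω : Type*} [MeasurableSpace Ω] (μ : Measure Ω) [IsProbabilityMeasure μ]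
    {B D p : ℕ} (π0 : Fin B → Fin D → Ω → Fin p → ℝ)
    (hmeas : ∀ b d, Measurable (π0 b d))
    (hindep : iIndepFun (fun bd : Fin B × Fin D => π0 bd.1 bd.2) μ)
    (πref : Ω → Fin p → ℝ) (hrefmeas : Measurable πref)
    (hident : ∀ b d, IdentDistrib (π0 b d) πref μ μ) (b : Fin B) :
    μ.map (fun ω (d : Fin D) => π0 b d ω)
      = Measure.pi (fun _ : Fin D => μ.map πref) := by
  haveI : IsProbabilityMeasure (μ.map πref) := Measure.isProbabilityMeasure_map hrefmeas.aemeasurable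
  refine (Measure.pi_eq fun s hs => ?_).symm
  rw [Measure.map_apply (measurable_pi_lambda _ (fun d => hmeas b d)) (MeasurableSet.univ_pi hs)]
  have hpre : (fun ω (d : Fin D) => π0 b d ω) ⁻¹' (Set.univ.pi s)
      = ⋂ i ∈ Finset.univ.image (fun d : Fin D => (b, d)),
          (π0 i.1 i.2) ⁻¹' (s i.2) := by
    ext ω
    simp [Set.mem_pi]
  rw [hpre]
  rw [hindep.measure_inter_preimage_eq_mul (Finset.univ.image (fun d : Fin D => (b, d)))
      (sets := fun i => s i.2) (fun i _ => hs i.2)]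
  rw [Finset.prod_image (fun d _ e _ h => congrArg Prod.snd h)]
  refine Finset.prod_congr rfl (fun d _ => ?_)
  rw [← Measure.map_apply (hmeas b d) (hs d), (hident b d).map_eq]

open Classical in
lemma jerInd_eq_indicator {p kmax : ℕ} (t : ℕ → ℝ) {γ : Type*} (g : γ → Fin p → ℝ) (ω : γ) :
    jerInd p kmax t (g ω) = ({a | jerEvent p kmax t (g a)}).indicator (fun _ => (1:ℝ)) ω := by
  rw [Set.indicator_apply, jerInd]
  exact if_congr Iff.rfl rfl rfl


/-- Finite-sample form of Theorem 3 (JER control for aggregated π-statistics). Fix `D ≥ 1`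
and a measurable aggregation `f : ℝ^D → ℝ`. Each draw `b ∈ {1,…,B}` of the aggregated vector
`π̄⁰_b` is obtained by aggregating coordinatewise `D` independent copies of `π⁰`; all the
`B × D` copies are i.i.d. Let `T̄(1),…,T̄(B')` be fixed threshold families, `α ∈ (0,1)`,
`λ` the largest `b'` whose empirical aggregated JER is at most `α` (when it exists) and
`t̂ = T̄(λ)`. Then for every `M > 0`,
`ℙ(λ exists and J̄ER⁰(t̂) > α + M/√B) ≤ B'/(4M²)`. -/
theorem calibrated_aggregated_jer_control
    {Ω : Type*} [MeasurableSpace Ω] (μ : Measure Ω) [IsProbabilityMeasure μ]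
    (p : ℕ) (hp : 1 ≤ p) (D : ℕ) (hD : 1 ≤ D)
    (f : (Fin D → ℝ) → ℝ) (hf : Measurable f)
    (B : ℕ) (hB : 0 < B) (B' : ℕ) (hB' : 1 ≤ B')
    (kmax : ℕ) (hkmax : 1 ≤ kmax)
    -- the template: `B'` fixed threshold families
    (T : Fin B' → ℕ → ℝ)
    (hT0 : ∀ b', 0 ≤ T b' 1)
    (hTmono : ∀ b', ∀ j k, 1 ≤ j → j ≤ k → k ≤ kmax → T b' j ≤ T b' k)
    (hT1 : ∀ b', T b' kmax ≤ 1)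
    (hTtemplate : ∀ b' c : Fin B', b' ≤ c → ∀ k, 1 ≤ k → k ≤ kmax → T b' k ≤ T c k)
    -- `B × D` i.i.d. copies of `π⁰`; draw `b` consists of the `D` copies `π0 b d`
    (π0 : Fin B → Fin D → Ω → Fin p → ℝ) (πref : Ω → Fin p → ℝ)
    (hmeas : ∀ b d, Measurable (π0 b d)) (hrefmeas : Measurable πref)
    (hindep : iIndepFun
      (fun bd : Fin B × Fin D => π0 bd.1 bd.2) μ)
    (hident : ∀ b d, IdentDistrib (π0 b d) πref μ μ)
    (α : ℝ) (hα0 : 0 < α) (hα1 : α < 1) :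
    ∀ M : ℝ, 0 < M →
      μ {ω | ∃ lam : Fin B',
          -- the empirical aggregated JER of `T̄(lam)` is at most `α`,
          (1 / B : ℝ) *
            (∑ b : Fin B, jerInd p kmax (T lam) (aggregate f (fun d => π0 b d ω))) ≤ α ∧
          -- `lam` is the largest such index,
          (∀ c : Fin B',
            (1 / B : ℝ) *
              (∑ b : Fin B, jerInd p kmax (T c) (aggregate f (fun d => π0 b d ω))) ≤ α →
            c ≤ lam) ∧
          -- and the true aggregated JER of `t̂ = T̄(lam)` exceeds `α + M/√B`
          α + M / Real.sqrt B <
            (μ {ω' | jerEvent p kmax (T lam)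
              (aggregate f (fun d => π0 ⟨0, hB⟩ d ω'))}).toReal}
        ≤ ENNReal.ofReal (B' / (4 * M ^ 2)) := by
  classical
  intro M hM
  -- basic real facts
  set sB : ℝ := Real.sqrt B with hsBdef
  have hBpos : (0:ℝ) < B := by exact_mod_cast hB
  have hsB : 0 < sB := Real.sqrt_pos.mpr hBpos
  have hsB2 : sB * sB = B := Real.mul_self_sqrt hBpos.le
  -- the blocks
  let Φ : Fin B → Ω → (Fin D → Fin p → ℝ) := fun b ω d => π0 b d ω
  have hΦmeas : ∀ b, Measurable (Φ b) := fun b => measurable_pi_lambda _ (fun d => hmeas b d)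
  have hmap : ∀ b, μ.map (Φ b) = Measure.pi (fun _ : Fin D => μ.map πref) :=
    block_map_eq_pi μ π0 hmeas hindep πref hrefmeas hident
  -- events
  let A : Fin B' → Fin B → Set Ω := fun lam b =>
    {ω | jerEvent p kmax (T lam) (aggregate f (fun d => π0 b d ω))}
  have hW : ∀ lam : Fin B', MeasurableSet
      {g : Fin D → Fin p → ℝ | jerEvent p kmax (T lam) (aggregate f g)} := fun lam =>
    (measurable_aggregate hf) (measurableSet_jerEvent p kmax (T lam))
  have hApre : ∀ lam b, A lam b
      = Φ b ⁻¹' {g : Fin D → Fin p → ℝ | jerEvent p kmax (T lam) (aggregate f g)} :=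
    fun lam b => rfl
  have hAmeas : ∀ lam b, MeasurableSet (A lam b) := fun lam b => by
    rw [hApre]; exact (hΦmeas b) (hW lam)
  -- common probability
  let q : Fin B' → ℝ := fun lam => (μ (A lam ⟨0, hB⟩)).toReal
  have hqb : ∀ lam b, μ (A lam b) = μ (A lam ⟨0, hB⟩) := by
    intro lam b
    rw [hApre, hApre, ← Measure.map_apply (hΦmeas b) (hW lam),
      ← Measure.map_apply (hΦmeas ⟨0, hB⟩) (hW lam), hmap b, hmap ⟨0, hB⟩]
  have hq01 : ∀ lam, 0 ≤ q lam ∧ q lam ≤ 1 := fun lam =>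
    ⟨ENNReal.toReal_nonneg, by
      have := prob_le_one (μ := μ) (s := A lam ⟨0, hB⟩)
      simpa [q] using ENNReal.toReal_mono (by simp) this⟩
  -- the indicator random variables
  let X : Fin B' → Fin B → Ω → ℝ := fun lam b => (A lam b).indicator (fun _ => (1:ℝ))
  have hXeq : ∀ lam b ω, jerInd p kmax (T lam) (aggregate f (fun d => π0 b d ω)) = X lam b ω :=
    fun lam b ω => jerInd_eq_indicator (T lam) (fun ω => aggregate f (fun d => π0 b d ω)) ω
  have hXmem : ∀ lam b, MemLp (X lam b) 2 μ := fun lam b =>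
    memLp_indicator_const 2 (hAmeas lam b) 1 (Or.inr (measure_ne_top μ _))
  have hXint : ∀ lam b, ∫ ω, X lam b ω ∂μ = q lam := by
    intro lam b
    rw [show (fun ω => X lam b ω) = X lam b from rfl]
    rw [integral_indicator_const (1:ℝ) (hAmeas lam b), measureReal_def, hqb lam b]
    simp [q]
  have hXsq : ∀ lam b, (fun ω => X lam b ω ^ 2) = X lam b := by
    intro lam b
    funext ω
    simp only [X, Set.indicator_apply]
    split_ifs <;> norm_num
  have hXvar : ∀ lam b, variance (X lam b) μ = q lam - q lam ^ 2 := by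
    intro lam b
    rw [variance_eq_sub (hXmem lam b)]
    have h2 : (fun ω => X lam b ω) ^ 2 = X lam b := by
      funext ω; simpa using congrFun (hXsq lam b) ω
    rw [h2, hXint lam b]
  -- pairwise independence
  have hXindep : ∀ lam : Fin B', ∀ b c : Fin B, b ≠ c →
      IndepFun (X lam b) (X lam c) μ := by
    intro lam b c hbc
    have hdisj : Disjoint ({b} ×ˢ (Finset.univ : Finset (Fin D)))
        ({c} ×ˢ (Finset.univ : Finset (Fin D))) := by
      rw [Finset.disjoint_left]
      rintro ⟨x, y⟩ hx hy
      simp only [Finset.mem_product, Finset.mem_singleton] at hx hy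
      exact hbc (hx.1 ▸ hy.1 ▸ rfl)
    have hbase := hindep.indepFun_finset _ _ hdisj (fun i => hmeas i.1 i.2)
    let G : (b0 : Fin B) → (({b0} ×ˢ (Finset.univ : Finset (Fin D)) :
        Finset (Fin B × Fin D)) → Fin p → ℝ) → ℝ := fun b0 h =>
      jerInd p kmax (T lam) (aggregate f (fun d => h ⟨(b0, d), by simp⟩))
    have hGmeas : ∀ b0, Measurable (G b0) := by
      intro b0
      exact (measurable_jerInd p kmax (T lam)).comp ((measurable_aggregate hf).comp
        (measurable_pi_lambda _ (fun d => measurable_pi_apply _)))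
    have hcomp : ∀ b0 : Fin B, X lam b0
        = (G b0) ∘ (fun a (i : ({b0} ×ˢ (Finset.univ : Finset (Fin D)) :
            Finset (Fin B × Fin D))) => π0 (i : Fin B × Fin D).1 (i : Fin B × Fin D).2 a) := by
      intro b0
      funext ω
      exact (hXeq lam b0 ω).symm
    rw [hcomp b, hcomp c]
    exact hbase.comp (hGmeas b) (hGmeas c)
  -- the sums
  let Sm : Fin B' → Ω → ℝ := fun lam ω => ∑ b : Fin B, X lam b ω
  have hSeq : ∀ lam, Sm lam = ∑ b : Fin B, X lam b := by
    intro lam; funext ω; simp [Sm, Finset.sum_apply]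
  have hSmem : ∀ lam, MemLp (Sm lam) 2 μ := fun lam => by
    rw [hSeq lam]; exact memLp_finsetSum' _ (fun b _ => hXmem lam b)
  have hSmean : ∀ lam, μ[Sm lam] = B * q lam := by
    intro lam
    have : μ[Sm lam] = ∑ b : Fin B, ∫ ω, X lam b ω ∂μ := by
      apply integral_finset_sum
      exact fun b _ => (hXmem lam b).integrable one_le_two
    rw [this]
    simp [hXint lam, Finset.sum_const, mul_comm]
  have hSvar : ∀ lam, variance (Sm lam) μ ≤ B * (1/4) := by
    intro lam
    rw [hSeq lam, IndepFun.variance_sum (fun b _ => hXmem lam b)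
      (fun b _ c _ hbc => hXindep lam b c hbc)]
    have hterm : ∀ b : Fin B, variance (X lam b) μ ≤ 1/4 := by
      intro b
      rw [hXvar lam b]
      nlinarith [sq_nonneg (2 * q lam - 1)]
    calc ∑ b : Fin B, variance (X lam b) μ ≤ ∑ _b : Fin B, (1/4 : ℝ) :=
          Finset.sum_le_sum (fun b _ => hterm b)
      _ = B * (1/4) := by simp [Finset.sum_const, mul_comm]
  -- Chebyshev for each lam
  have hcheb : ∀ lam : Fin B',
      μ {ω | M * sB ≤ |Sm lam ω - μ[Sm lam]|} ≤ ENNReal.ofReal (1 / (4 * M ^ 2)) := by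
    intro lam
    have hc : 0 < M * sB := mul_pos hM hsB
    have h1 := meas_ge_le_variance_div_sq (hSmem lam) hc
    refine h1.trans (ENNReal.ofReal_le_ofReal ?_)
    have hden : (M * sB) ^ 2 = M ^ 2 * B := by
      rw [mul_pow, sq sB, hsB2]
    rw [hden, div_le_div_iff₀ (by positivity) (by positivity)]
    calc variance (Sm lam) μ * (4 * M ^ 2) ≤ (B * (1/4)) * (4 * M ^ 2) := by
          apply mul_le_mul_of_nonneg_right (hSvar lam) (by positivity)
      _ = 1 * (M ^ 2 * B) := by ring
  -- inclusion of the target event in the union of Chebyshev deviation events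
  have hsub : {ω | ∃ lam : Fin B',
      (1 / B : ℝ) *
        (∑ b : Fin B, jerInd p kmax (T lam) (aggregate f (fun d => π0 b d ω))) ≤ α ∧
      (∀ c : Fin B',
        (1 / B : ℝ) *
          (∑ b : Fin B, jerInd p kmax (T c) (aggregate f (fun d => π0 b d ω))) ≤ α →
        c ≤ lam) ∧
      α + M / Real.sqrt B <
        (μ {ω' | jerEvent p kmax (T lam)
          (aggregate f (fun d => π0 ⟨0, hB⟩ d ω'))}).toReal}
      ⊆ ⋃ lam : Fin B', {ω | M * sB ≤ |Sm lam ω - μ[Sm lam]|} := by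
    rintro ω ⟨lam, h1, _h2, h3⟩
    refine Set.mem_iUnion.mpr ⟨lam, ?_⟩
    show M * sB ≤ |Sm lam ω - μ[Sm lam]|
    have h1' : (1 / (B:ℝ)) * Sm lam ω ≤ α := by
      simpa only [hXeq] using h1
    have hS : Sm lam ω ≤ (B:ℝ) * α := by
      rw [one_div, inv_mul_le_iff₀ hBpos] at h1'
      exact h1'
    have hq : α + M / sB < q lam := h3
    have h5 : (B:ℝ) * (M / sB) = M * sB := by
      rw [← hsB2]; field_simp
    have key : M * sB < (B:ℝ) * q lam - Sm lam ω := by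
      have h4 : (B:ℝ) * (α + M / sB) < (B:ℝ) * q lam := mul_lt_mul_of_pos_left hq hBpos
      rw [mul_add, h5] at h4
      linarith
    rw [hSmean lam]
    calc M * sB ≤ (B:ℝ) * q lam - Sm lam ω := key.le
      _ = -(Sm lam ω - (B:ℝ) * q lam) := by ring
      _ ≤ |Sm lam ω - (B:ℝ) * q lam| := neg_le_abs _
  -- conclude
  refine le_trans (measure_mono hsub) ?_
  calc μ (⋃ lam : Fin B', {ω | M * sB ≤ |Sm lam ω - μ[Sm lam]|})
      ≤ ∑' lam : Fin B', μ {ω | M * sB ≤ |Sm lam ω - μ[Sm lam]|} := measure_iUnion_le _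
    _ ≤ ∑' _lam : Fin B', ENNReal.ofReal (1 / (4 * M ^ 2)) :=
        ENNReal.tsum_le_tsum (fun lam => hcheb lam)
    _ = (B' : ENNReal) * ENNReal.ofReal (1 / (4 * M ^ 2)) := by
        rw [tsum_fintype]
        simp [Finset.sum_const, Fintype.card_fin, nsmul_eq_mul]
    _ = ENNReal.ofReal (B' / (4 * M ^ 2)) := by
        rw [← ENNReal.ofReal_natCast B', ← ENNReal.ofReal_mul (by positivity)]
        congr 1
        rw [mul_one_div]
end

section
/- Let p ≥ 1 and H0 ⊆ {1,…,p} be nonempty with |H0| = p0. Let χ = (χ_1,…,χ_p) be a random vector with values in {−1,1}^p such that the family (χ_j)_{j∈H0} is i.i.d. uniform on {−1,1} and is independent of (χ_j)_{j∉H0}. Define Z_j = |{k < j : χ_k = −1}| and π_j = (1 + Z_j)/p if χ_j = 1, π_j = 1 if χ_j = −1. Independently, let χ^0 be i.i.d. uniform on {−1,1}^p, with π^0 defined from χ^0 in the same way. Let t = (t_1,…,t_{kmax}) be a threshold family with t_{kmax} ≤ 1 such that ℙ(∃ k ∈ {1,…,kmax} : π^0_{(k)} < t_k) ≤ α. Then,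 with V^t(S) = min_{1 ≤ k ≤ kmax} [(k − 1) + |{i ∈ S : π_i ≥ t_k}|], one has ℙ(for all S ⊆ {1,…,p}: |S ∩ H0| ≤ V^t(S)) ≥ 1 − α. -/
open MeasureTheory ProbabilityTheory

/-! ### Auxiliary lemmas -/

/-- If at least `k` of the values of `v` on `A` are `< c`, the `k`-th order statistic is `< c`. -/
lemma orderStat_lt_of_count {ι : Type*} (A : Finset ι) (v : ι → ℝ) (c : ℝ) (k : ℕ)
    (hk : 1 ≤ k) (h : k ≤ (A.filter (fun i => v i < c)).card) :
    orderStat A v k < c := by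
  classical
  set l := Multiset.sort (A.val.map v) (· ≤ ·) with hl
  have hsort : l.Pairwise (· ≤ ·) := Multiset.pairwise_sort _ _
  have hcount : k ≤ l.countP (fun x => decide (x < c)) := by
    have h1 : Multiset.countP (fun x => x < c) (A.val.map v)
        = l.countP (fun x => decide (x < c)) := by
      conv_lhs => rw [← Multiset.sort_eq (A.val.map v) (· ≤ ·)]
      exact Multiset.coe_countP _ _
    have h2 : (A.filter (fun i => v i < c)).card
        = Multiset.countP (fun x => x < c) (A.val.map v) := by
      rw [Multiset.countP_map]
      rfl
    omega
  have hlen : l.length = A.card := by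
    rw [hl, Multiset.length_sort, Multiset.card_map]
    rfl
  have hkl : k - 1 < l.length := by
    have := List.countP_le_length (p := fun x => decide (x < c)) (l := l)
    omega
  have hget : orderStat A v k = l[k-1] := List.getD_eq_getElem l 0 hkl
  rw [hget]
  by_contra hcge
  push_neg at hcge
  have hdrop : ∀ x ∈ l.drop (k-1), ¬ (x < c) := by
    intro x hx
    rw [List.drop_eq_getElem_cons hkl] at hx
    have hle : l[k-1] ≤ x := by
      rcases List.mem_cons.mp hx with h' | h'
      · exact le_of_eq h'.symm
      · have hs : (l.drop (k-1)).Pairwise (· ≤ ·) :=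
          List.Pairwise.sublist (List.drop_sublist _ _) hsort
        rw [List.drop_eq_getElem_cons hkl] at hs
        exact (List.pairwise_cons.mp hs).1 x h'
    exact not_lt.mpr (le_trans hcge hle)
  have hzero : (l.drop (k-1)).countP (fun x => decide (x < c)) = 0 := by
    rw [List.countP_eq_zero]
    intro x hx
    simpa using hdrop x hx
  have hsplit : l.countP (fun x => decide (x < c))
      = (l.take (k-1)).countP (fun x => decide (x < c))
        + (l.drop (k-1)).countP (fun x => decide (x < c)) := by
    conv_lhs => rw [← List.take_append_drop (k-1) l]
    exact List.countP_append
  have htake := List.countP_le_length (p := fun x => decide (x < c)) (l := l.take (k-1))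
  have : (l.take (k-1)).length ≤ k - 1 := by simp
  omega

/-- If some `S` violates the post hoc bound, then for some `k ≤ kmax` at least `k` nulls
have `π`-value `< t k`. -/
lemma bad_of_violation (p kmax : ℕ) (hkmax : 1 ≤ kmax) (t : ℕ → ℝ) (H0 : Finset (Fin p))
    (π : Fin p → ℝ) (S : Finset (Fin p))
    (h : Vbound p kmax hkmax t π S < (S ∩ H0).card) :
    ∃ k, 1 ≤ k ∧ k ≤ kmax ∧ k ≤ (H0.filter (fun j => π j < t k)).card := by
  classical
  unfold Vbound at h
  obtain ⟨k, hkmem, hklt⟩ := (Finset.inf'_lt_iff _).mp h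
  rw [Finset.mem_Icc] at hkmem
  refine ⟨k, hkmem.1, hkmem.2, ?_⟩
  have hsplit : ((S ∩ H0).filter (fun i => t k ≤ π i)).card
      + ((S ∩ H0).filter (fun i => ¬ t k ≤ π i)).card = (S ∩ H0).card :=
    Finset.card_filter_add_card_filter_not _
  have hsub : ((S ∩ H0).filter (fun i => t k ≤ π i)).card
      ≤ (S.filter (fun i => t k ≤ π i)).card :=
    Finset.card_le_card (Finset.filter_subset_filter _ Finset.inter_subset_left)
  have hsub2 : ((S ∩ H0).filter (fun i => ¬ t k ≤ π i)).card
      ≤ (H0.filter (fun j => π j < t k)).card := by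
    apply Finset.card_le_card
    intro i hi
    rw [Finset.mem_filter] at hi ⊢
    exact ⟨(Finset.mem_inter.mp hi.1).2, not_le.mp hi.2⟩
  omega

/-- `π` statistics are pointwise monotone when `-1` signs are added elsewhere. -/
lemma piStat_mono (p : ℕ) (χ χ' : Fin p → ℤ) (j : Fin p) (hsign : χ' j = χ j)
    (h : ∀ k, χ' k = -1 → χ k = -1) : piStat p χ' j ≤ piStat p χ j := by
  have hZ : Zstat p χ' j ≤ Zstat p χ j := by
    apply Finset.card_le_card
    intro k hk
    simp only [Finset.mem_filter, Finset.mem_univ, true_and] at hk ⊢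
    exact ⟨hk.1, h k hk.2⟩
  unfold piStat
  rw [hsign]
  by_cases h1 : χ j = 1
  · rw [if_pos h1, if_pos h1]
    have : (Zstat p χ' j : ℝ) ≤ (Zstat p χ j : ℝ) := by exact_mod_cast hZ
    gcongr
  · rw [if_neg h1, if_neg h1]

/-- `sgv g` copies the first `p0` coordinates of `g` onto `H0` (in increasing order),
and is `1` elsewhere. -/
noncomputable def sgv (p p0 : ℕ) (hle : p0 ≤ p) (H0 : Finset (Fin p)) (hc : H0.card = p0)
    (g : Fin p → ℤ) : Fin p → ℤ :=
  fun j => if h : j ∈ H0 then g (Fin.castLE hle ((H0.orderIsoOfFin hc).symm ⟨j, h⟩)) else 1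

/-- Coupling identity: the `π` statistics of `sgv g` on `H0` coincide with those of `g`
on the first `p0` coordinates. -/
lemma sgv_piStat (p p0 : ℕ) (hle : p0 ≤ p) (H0 : Finset (Fin p)) (hc : H0.card = p0)
    (g : Fin p → ℤ) (i : Fin p0) :
    piStat p (sgv p p0 hle H0 hc g) ↑((H0.orderIsoOfFin hc) i)
      = piStat p g (Fin.castLE hle i) := by
  classical
  set e := H0.orderIsoOfFin hc with he
  have hmem : ((e i : {x // x ∈ H0}) : Fin p) ∈ H0 := (e i).2
  have heta : (⟨↑(e i), hmem⟩ : {x // x ∈ H0}) = e i := rfl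
  have hval : sgv p p0 hle H0 hc g ↑(e i) = g (Fin.castLE hle i) := by
    rw [sgv, dif_pos hmem]
    congr 1
    rw [heta, e.symm_apply_apply]
  have hZ : Zstat p (sgv p p0 hle H0 hc g) ↑(e i) = Zstat p g (Fin.castLE hle i) := by
    unfold Zstat
    apply Finset.card_nbij
      (i := fun k => if h : k ∈ H0 then Fin.castLE hle (e.symm ⟨k, h⟩) else k)
    · intro k hk
      simp only [Finset.mem_coe, Finset.mem_filter, Finset.mem_univ, true_and] at hk ⊢
      obtain ⟨hklt, hkneg⟩ := hk
      have hkH : k ∈ H0 := by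
        by_contra hn
        rw [sgv, dif_neg hn] at hkneg
        norm_num at hkneg
      rw [dif_pos hkH]
      constructor
      · have h1 : e.symm ⟨k, hkH⟩ < i := by
          rw [← e.lt_iff_lt, e.apply_symm_apply, ← Subtype.coe_lt_coe]
          exact hklt
        exact h1
      · rw [sgv, dif_pos hkH] at hkneg
        exact hkneg
    · intro a ha b hb hab
      simp only [Finset.coe_filter, Set.mem_setOf_eq, Finset.mem_univ, true_and] at ha hb
      have haH : a ∈ H0 := by
        by_contra hn
        have := ha.2; rw [sgv, dif_neg hn] at this; norm_num at this
      have hbH : b ∈ H0 := by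
        by_contra hn
        have := hb.2; rw [sgv, dif_neg hn] at this; norm_num at this
      simp only [dif_pos haH, dif_pos hbH] at hab
      have h1 := Fin.castLE_injective hle hab
      have h2 := e.symm.injective h1
      exact Subtype.mk_eq_mk.mp h2
    · intro m hm
      simp only [Finset.coe_filter, Set.mem_setOf_eq, Finset.mem_univ, true_and] at hm
      obtain ⟨hmlt, hmneg⟩ := hm
      have hmp0 : (m : ℕ) < p0 := by
        have : (m : ℕ) < (i : ℕ) := by simpa [Fin.lt_def] using hmlt
        exact lt_trans this i.isLt
      set i0 : Fin p0 := ⟨(m : ℕ), hmp0⟩ with hi0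
      have hcast : Fin.castLE hle i0 = m := by
        apply Fin.ext; rfl
      refine ⟨↑(e i0), ?_, ?_⟩
      · simp only [Finset.coe_filter, Set.mem_setOf_eq, Finset.mem_univ, true_and]
        constructor
        · rw [Subtype.coe_lt_coe, e.lt_iff_lt]
          exact hmlt
        · have hmemH : ((e i0 : {x // x ∈ H0}) : Fin p) ∈ H0 := (e i0).2
          rw [sgv, dif_pos hmemH]
          have heta0 : (⟨↑(e i0), hmemH⟩ : {x // x ∈ H0}) = e i0 := rfl
          rw [heta0, e.symm_apply_apply, hcast]
          exact hmneg
      · have hmemH : ((e i0 : {x // x ∈ H0}) : Fin p) ∈ H0 := (e i0).2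
        simp only [dif_pos hmemH]
        have heta0 : (⟨↑(e i0), hmemH⟩ : {x // x ∈ H0}) = e i0 := rfl
        rw [heta0, e.symm_apply_apply, hcast]
  unfold piStat
  rw [hval, hZ]

/-- Counting transfer: nulls with small `π`-value for `sgv g` inject into coordinates with
small `π`-value for `g`. -/
lemma sgv_count_le (p p0 : ℕ) (hle : p0 ≤ p) (H0 : Finset (Fin p)) (hc : H0.card = p0)
    (g : Fin p → ℤ) (c : ℝ) :
    (H0.filter (fun j => piStat p (sgv p p0 hle H0 hc g) j < c)).card
      ≤ (Finset.univ.filter (fun m => piStat p g m < c)).card := by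
  classical
  set e := H0.orderIsoOfFin hc with he
  apply Finset.card_le_card_of_injOn
    (f := fun j => if h : j ∈ H0 then Fin.castLE hle (e.symm ⟨j, h⟩) else j)
  · intro j hj
    rw [Finset.mem_coe, Finset.mem_filter] at hj
    obtain ⟨hjH, hjlt⟩ := hj
    rw [Finset.mem_coe, Finset.mem_filter]
    refine ⟨Finset.mem_univ _, ?_⟩
    simp only [dif_pos hjH]
    have hkey := sgv_piStat p p0 hle H0 hc g (e.symm ⟨j, hjH⟩)
    rw [e.apply_symm_apply] at hkey
    rw [← hkey]
    exact hjlt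
  · intro a ha b hb hab
    rw [Finset.mem_coe, Finset.mem_filter] at ha hb
    simp only [dif_pos ha.1, dif_pos hb.1] at hab
    have h1 := Fin.castLE_injective hle hab
    have h2 := e.symm.injective h1
    exact Subtype.mk_eq_mk.mp h2

/-- The fiber of the map `g ↦ sgv g` over a sign pattern `y` supported on `H0`
has cardinality `2 ^ (p - p0)`. -/
lemma fiber_card (p p0 : ℕ) (hle : p0 ≤ p) (H0 : Finset (Fin p)) (hc : H0.card = p0)
    (y : Fin p → ℤ)
    (hy : ∀ j, y j ∈ (if j ∈ H0 then ({1, -1} : Finset ℤ) else {1})) :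
    ((Fintype.piFinset (fun _ : Fin p => ({1, -1} : Finset ℤ))).filter
      (fun g => sgv p p0 hle H0 hc g = y)).card = 2 ^ (p - p0) := by
  classical
  set e := H0.orderIsoOfFin hc with he
  have hset : (Fintype.piFinset (fun _ : Fin p => ({1, -1} : Finset ℤ))).filter
      (fun g => sgv p p0 hle H0 hc g = y)
      = Fintype.piFinset (fun m : Fin p =>
          if h : (m : ℕ) < p0 then ({y ↑(e ⟨(m : ℕ), h⟩)} : Finset ℤ) else {1, -1}) := by
    ext g
    simp only [Finset.mem_filter, Fintype.mem_piFinset]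
    constructor
    · rintro ⟨hg, hgy⟩ m
      by_cases h : (m : ℕ) < p0
      · rw [dif_pos h, Finset.mem_singleton]
        have hj : ((e ⟨(m : ℕ), h⟩ : {x // x ∈ H0}) : Fin p) ∈ H0 := (e _).2
        have hcf := congrFun hgy ↑(e ⟨(m : ℕ), h⟩)
        rw [sgv] at hcf
        simp only [dif_pos hj] at hcf
        rw [show (⟨↑(e ⟨(m : ℕ), h⟩), hj⟩ : {x // x ∈ H0}) = e ⟨(m : ℕ), h⟩ from rfl,
          e.symm_apply_apply] at hcf
        exact hcf
      · rw [dif_neg h]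
        exact hg m
    · intro hmem
      have hgall : ∀ m : Fin p, g m ∈ ({1, -1} : Finset ℤ) := by
        intro m
        have hm := hmem m
        by_cases h : (m : ℕ) < p0
        · rw [dif_pos h, Finset.mem_singleton] at hm
          rw [hm]
          have hj : ((e ⟨(m : ℕ), h⟩ : {x // x ∈ H0}) : Fin p) ∈ H0 := (e _).2
          have hyy := hy ↑(e ⟨(m : ℕ), h⟩)
          rwa [if_pos hj] at hyy
        · rwa [dif_neg h] at hm
      refine ⟨hgall, ?_⟩
      funext j
      by_cases hj : j ∈ H0
      · rw [sgv]
        simp only [dif_pos hj]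
        set i0 := e.symm ⟨j, hj⟩ with hi0
        have hlt : ((Fin.castLE hle i0 : Fin p) : ℕ) < p0 := i0.isLt
        have hm := hmem (Fin.castLE hle i0)
        rw [dif_pos hlt, Finset.mem_singleton] at hm
        rw [hm]
        congr 1
        have heq : (⟨((Fin.castLE hle i0 : Fin p) : ℕ), hlt⟩ : Fin p0) = i0 := Fin.ext rfl
        rw [heq, hi0, e.apply_symm_apply]
      · rw [sgv]
        simp only [dif_neg hj]
        have hyy := hy j
        rw [if_neg hj, Finset.mem_singleton] at hyy
        exact hyy.symm
  rw [hset, Fintype.card_piFinset]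
  have hcardterm : ∀ m : Fin p,
      ((if h : (m : ℕ) < p0 then ({y ↑(e ⟨(m : ℕ), h⟩)} : Finset ℤ) else {1, -1}).card)
      = if (m : ℕ) < p0 then 1 else 2 := by
    intro m
    by_cases h : (m : ℕ) < p0
    · rw [dif_pos h, if_pos h, Finset.card_singleton]
    · rw [dif_neg h, if_neg h]
      decide
  rw [Finset.prod_congr rfl (fun m _ => hcardterm m)]
  rw [Finset.prod_ite, Finset.prod_const, Finset.prod_const, one_pow, one_mul]
  congr 1
  have hcard1 : (Finset.univ.filter (fun m : Fin p => (m : ℕ) < p0)).card = p0 := by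
    have hb := Finset.card_nbij (s := (Finset.univ : Finset (Fin p0)))
      (t := Finset.univ.filter (fun m : Fin p => (m : ℕ) < p0))
      (fun i => Fin.castLE hle i)
      (fun i _ => by simp)
      (fun a _ b _ hab => Fin.castLE_injective hle hab)
      (by
        intro m hm
        simp only [Finset.coe_filter, Set.mem_setOf_eq, Finset.mem_univ, true_and] at hm
        exact ⟨⟨(m : ℕ), hm⟩, by simp, Fin.ext rfl⟩)
    simpa using hb.symm
  have htot := Finset.card_filter_add_card_filter_not
    (s := (Finset.univ : Finset (Fin p))) (p := fun m : Fin p => (m : ℕ) < p0)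
  have hcardu : (Finset.univ : Finset (Fin p)).card = p := Finset.card_fin p
  omega

/-- Post hoc FDP guarantee underlying KOPI. Let `p ≥ 1` and `H0 ⊆ {1,…,p}` nonempty. Let `χ`
be a random sign vector whose restriction to `H0` is i.i.d. uniform on `{−1,1}` and
independent of the rest (encoded by `hχlaw`), with π statistics `π`; independently, let `χ⁰`
be i.i.d. uniform on `{−1,1}^p` with π statistics `π⁰`. Let `t` be a threshold family with
`t_kmax ≤ 1` such that `ℙ(∃ k ∈ {1,…,kmax} : π⁰_{(k)} < t_k) ≤ α`. Then with
`V^t(S) = min_{1 ≤ k ≤ kmax} [(k−1) + |{i ∈ S : π_i ≥ t_k}|]`,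
`ℙ(∀ S ⊆ {1,…,p} : |S ∩ H0| ≤ V^t(S)) ≥ 1 − α`. -/
theorem kopi_posthoc_fdp_control
    {Ω : Type*} [MeasurableSpace Ω] (μ : Measure Ω) [IsProbabilityMeasure μ]
    (p : ℕ) (hp : 1 ≤ p) (H0 : Finset (Fin p)) (hH0 : H0.Nonempty)
    (χ χ0 : Ω → Fin p → ℤ) (hχm : Measurable χ) (hχ0m : Measurable χ0)
    (hχval : ∀ ω j, χ ω j = 1 ∨ χ ω j = -1)
    (hχ0val : ∀ ω j, χ0 ω j = 1 ∨ χ0 ω j = -1)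
    -- `(χ_j)_{j∈H0}` is i.i.d. uniform on `{−1,1}` and independent of `(χ_j)_{j∉H0}`:
    (hχlaw : ∀ (s : Fin p → ℤ), (∀ j ∈ H0, s j = 1 ∨ s j = -1) →
      ∀ (E : Set (Fin p → ℤ)), MeasurableSet E →
      (∀ f g : Fin p → ℤ, (∀ j ∉ H0, f j = g j) → (f ∈ E ↔ g ∈ E)) →
      μ {ω | (∀ j ∈ H0, χ ω j = s j) ∧ χ ω ∈ E}
        = (1 / 2 : ENNReal) ^ H0.card * μ {ω | χ ω ∈ E})
    -- `χ⁰` is i.i.d. uniform on `{−1,1}^p`: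
    (hχ0law : ∀ s : Fin p → ℤ, (∀ j, s j = 1 ∨ s j = -1) →
      μ {ω | χ0 ω = s} = (1 / 2 : ENNReal) ^ p)
    -- `χ⁰` is independent of `χ`:
    (hindep : IndepFun χ χ0 μ)
    -- threshold family `t` of size `kmax` with `t_kmax ≤ 1`:
    (kmax : ℕ) (hkmax : 1 ≤ kmax) (t : ℕ → ℝ) (ht0 : 0 ≤ t 1)
    (htmono : ∀ j k, 1 ≤ j → j ≤ k → k ≤ kmax → t j ≤ t k) (ht1 : t kmax ≤ 1)
    (α : ℝ)
    -- the reference JER is controlled at level `α`: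
    (hjer0 : μ {ω | ∃ k, 1 ≤ k ∧ k ≤ kmax ∧
        orderStat Finset.univ (piStat p (χ0 ω)) k < t k} ≤ ENNReal.ofReal α) :
    1 - ENNReal.ofReal α ≤
      μ {ω | ∀ S : Finset (Fin p),
        (S ∩ H0).card ≤ Vbound p kmax hkmax t (piStat p (χ ω)) S} := by
  classical
  have hp0p : H0.card ≤ p := by simpa using Finset.card_le_univ H0
  -- abbreviations
  set bad : (Fin p → ℤ) → Prop := fun f =>
    ∃ k, 1 ≤ k ∧ k ≤ kmax ∧ k ≤ (H0.filter (fun j => piStat p f j < t k)).card with hbaddef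
  set cmb : (Fin p → ℤ) → (Fin p → ℤ) → (Fin p → ℤ) :=
    fun s f j => if j ∈ H0 then s j else f j with hcmbdef
  set wrst : (Fin p → ℤ) → (Fin p → ℤ) := fun s => cmb s (fun _ => 1) with hwrstdef
  set sg : (Fin p → ℤ) → (Fin p → ℤ) := sgv p H0.card hp0p H0 rfl with hsgdef
  -- monotonicity: worst case is all-(+1) off the nulls
  have hmono : ∀ s f, bad (cmb s f) → bad (wrst s) := by
    rintro s f ⟨k, hk1, hk2, hkc⟩
    refine ⟨k, hk1, hk2, le_trans hkc (Finset.card_le_card ?_)⟩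
    intro j hj
    rw [Finset.mem_filter] at hj ⊢
    refine ⟨hj.1, lt_of_le_of_lt ?_ hj.2⟩
    apply piStat_mono
    · simp [hwrstdef, hcmbdef, hj.1]
    · intro m hm
      simp only [hwrstdef, hcmbdef] at hm ⊢
      by_cases hmH : m ∈ H0
      · rw [if_pos hmH] at hm ⊢; exact hm
      · rw [if_neg hmH] at hm; norm_num at hm
  -- the good event
  set G := {ω | ∀ S : Finset (Fin p),
      (S ∩ H0).card ≤ Vbound p kmax hkmax t (piStat p (χ ω)) S} with hGdef
  have hGmeas : MeasurableSet G := by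
    have hGeq : G = χ ⁻¹' {f | ∀ S : Finset (Fin p),
        (S ∩ H0).card ≤ Vbound p kmax hkmax t (piStat p f) S} := rfl
    rw [hGeq]
    exact hχm ((Set.to_countable _).measurableSet)
  set Sgn : Finset (Fin p → ℤ) :=
    Fintype.piFinset (fun j => if j ∈ H0 then ({1, -1} : Finset ℤ) else {1}) with hSgndef
  set SgnAll : Finset (Fin p → ℤ) :=
    Fintype.piFinset (fun _ : Fin p => ({1, -1} : Finset ℤ)) with hSgnAlldef
  -- Step 1: cover the bad event by sign patterns on the nulls
  have hcover : Gᶜ ⊆ ⋃ s ∈ Sgn,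
      {ω | (∀ j ∈ H0, χ ω j = s j) ∧ χ ω ∈ {f | bad (cmb s f)}} := by
    intro ω hω
    simp only [Set.mem_compl_iff, hGdef, Set.mem_setOf_eq, not_forall, not_le] at hω
    obtain ⟨S, hS⟩ := hω
    have hbad : bad (χ ω) := bad_of_violation p kmax hkmax t H0 _ S hS
    set s0 : Fin p → ℤ := fun j => if j ∈ H0 then χ ω j else 1 with hs0def
    have hs0 : s0 ∈ Sgn := by
      simp only [hSgndef, Fintype.mem_piFinset]
      intro j
      by_cases hj : j ∈ H0
      · rw [if_pos hj]
        simp only [hs0def, if_pos hj]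
        rcases hχval ω j with h | h <;> simp [h]
      · rw [if_neg hj]
        simp [hs0def, if_neg hj]
    have hcmb : cmb s0 (χ ω) = χ ω := by
      funext j
      by_cases hj : j ∈ H0 <;> simp [hcmbdef, hs0def, hj]
    simp only [Set.mem_iUnion]
    refine ⟨s0, hs0, ?_, ?_⟩
    · intro j hj
      simp [hs0def, hj]
    · simp only [Set.mem_setOf_eq, hcmb]
      exact hbad
  -- Step 2: apply the law of χ on each piece
  have hstep1 : μ Gᶜ ≤ ∑ s ∈ Sgn,
      (1 / 2 : ENNReal) ^ H0.card * μ {ω | χ ω ∈ {f | bad (cmb s f)}} := by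
    calc μ Gᶜ ≤ μ (⋃ s ∈ Sgn,
        {ω | (∀ j ∈ H0, χ ω j = s j) ∧ χ ω ∈ {f | bad (cmb s f)}}) := measure_mono hcover
      _ ≤ ∑ s ∈ Sgn, μ {ω | (∀ j ∈ H0, χ ω j = s j) ∧ χ ω ∈ {f | bad (cmb s f)}} :=
          measure_biUnion_finset_le _ _
      _ = ∑ s ∈ Sgn, (1 / 2 : ENNReal) ^ H0.card * μ {ω | χ ω ∈ {f | bad (cmb s f)}} := by
          apply Finset.sum_congr rfl
          intro s hs
          apply hχlaw
          · intro j hj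
            have hmem := (Fintype.mem_piFinset.mp hs) j
            rw [if_pos hj] at hmem
            simpa using hmem
          · exact (Set.to_countable _).measurableSet
          · intro f g hfg
            have hcmbeq : cmb s f = cmb s g := by
              funext j
              by_cases hj : j ∈ H0 <;> simp [hcmbdef, hj, hfg j]
            simp only [Set.mem_setOf_eq, hcmbeq]
  -- Step 3: bound each conditional probability by the worst case indicator
  have hstep2 : ∀ s, μ {ω | χ ω ∈ {f | bad (cmb s f)}} ≤ if bad (wrst s) then 1 else 0 := by
    intro s
    by_cases hb : bad (wrst s)
    · rw [if_pos hb]; exact prob_le_one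
    · rw [if_neg hb]
      have hempty : {ω | χ ω ∈ {f | bad (cmb s f)}} = ∅ := by
        ext ω
        simp only [Set.mem_setOf_eq, Set.mem_empty_iff_false, iff_false]
        intro h
        exact hb (hmono s (χ ω) h)
      rw [hempty, measure_empty]
  have hstep3 : μ Gᶜ ≤ ∑ s ∈ Sgn.filter (fun s => bad (wrst s)), (1 / 2 : ENNReal) ^ H0.card := by
    refine le_trans hstep1 ?_
    rw [Finset.sum_filter]
    apply Finset.sum_le_sum
    intro s _
    by_cases hb : bad (wrst s)
    · rw [if_pos hb]
      calc (1 / 2 : ENNReal) ^ H0.card * μ {ω | χ ω ∈ {f | bad (cmb s f)}}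
          ≤ (1 / 2 : ENNReal) ^ H0.card * 1 := by
            apply mul_le_mul_right
            refine le_trans (hstep2 s) ?_
            rw [if_pos hb]
        _ = (1 / 2 : ENNReal) ^ H0.card := mul_one _
    · rw [if_neg hb]
      have h0 := hstep2 s
      rw [if_neg hb, le_zero_iff] at h0
      rw [h0, mul_zero]
  -- powers of 1/2 arithmetic
  have h21 : (2 : ENNReal) * ((1 : ENNReal) / 2) = 1 := by
    rw [one_div]
    exact ENNReal.mul_inv_cancel two_ne_zero ENNReal.ofNat_ne_top
  have hpow : ((2 : ENNReal)) ^ (p - H0.card) * ((1 : ENNReal) / 2) ^ p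
      = ((1 : ENNReal) / 2) ^ H0.card := by
    calc (2 : ENNReal) ^ (p - H0.card) * ((1 : ENNReal) / 2) ^ p
        = (2 : ENNReal) ^ (p - H0.card)
          * (((1 : ENNReal) / 2) ^ (p - H0.card) * ((1 : ENNReal) / 2) ^ H0.card) := by
          rw [← pow_add, Nat.sub_add_cancel hp0p]
      _ = ((2 : ENNReal) * ((1 : ENNReal) / 2)) ^ (p - H0.card)
          * ((1 : ENNReal) / 2) ^ H0.card := by
          rw [mul_pow]; ring
      _ = ((1 : ENNReal) / 2) ^ H0.card := by rw [h21, one_pow, one_mul]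
  -- Step 4: fiberwise counting: transfer to full sign vectors
  have hsg_mem : ∀ g ∈ SgnAll, sg g ∈ Sgn := by
    intro g hg
    simp only [hSgndef, Fintype.mem_piFinset]
    intro j
    by_cases hj : j ∈ H0
    · rw [if_pos hj]
      rw [hsgdef, sgv]
      simp only [dif_pos hj]
      exact (Fintype.mem_piFinset.mp hg) _
    · rw [if_neg hj]
      rw [hsgdef, sgv]
      simp [dif_neg hj]
  have hwrst_eq : ∀ s : Fin p → ℤ, (∀ j ∉ H0, s j = 1) → wrst s = s := by
    intro s hs
    funext j
    by_cases hj : j ∈ H0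
    · simp [hwrstdef, hcmbdef, hj]
    · simp [hwrstdef, hcmbdef, hj, hs j hj]
  have hDsum : ∑ s ∈ Sgn.filter (fun s => bad (wrst s)), ((1 : ENNReal) / 2) ^ H0.card
      = ∑ g ∈ SgnAll.filter (fun g => bad (sg g)), ((1 : ENNReal) / 2) ^ p := by
    rw [Finset.sum_filter, Finset.sum_filter,
      ← Finset.sum_fiberwise_of_maps_to hsg_mem
        (fun g => if bad (sg g) then ((1 : ENNReal) / 2) ^ p else 0)]
    apply Finset.sum_congr rfl
    intro y hy
    have hymem : ∀ j, y j ∈ (if j ∈ H0 then ({1, -1} : Finset ℤ) else {1}) :=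
      Fintype.mem_piFinset.mp hy
    have hyoff : ∀ j ∉ H0, y j = 1 := by
      intro j hj
      have := hymem j
      rwa [if_neg hj, Finset.mem_singleton] at this
    have hinner : ∑ g ∈ SgnAll.filter (fun g => sg g = y),
        (if bad (sg g) then ((1 : ENNReal) / 2) ^ p else 0)
        = ∑ _g ∈ SgnAll.filter (fun g => sg g = y),
        (if bad y then ((1 : ENNReal) / 2) ^ p else 0) := by
      apply Finset.sum_congr rfl
      intro g hg
      rw [(Finset.mem_filter.mp hg).2]
    rw [hinner, Finset.sum_const]
    have hfc : (SgnAll.filter (fun g => sg g = y)).card = 2 ^ (p - H0.card) :=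
      fiber_card p H0.card hp0p H0 rfl y hymem
    rw [hfc, nsmul_eq_mul, hwrst_eq y hyoff]
    by_cases hb : bad y
    · rw [if_pos hb, if_pos hb]
      push_cast
      rw [hpow]
    · rw [if_neg hb, if_neg hb, mul_zero]
  -- Step 5: identify with the reference measure and use JER control
  have hstep5 : ∑ g ∈ SgnAll.filter (fun g => bad (sg g)), ((1 : ENNReal) / 2) ^ p
      ≤ ENNReal.ofReal α := by
    have heq : ∀ g ∈ SgnAll.filter (fun g => bad (sg g)),
        ((1 : ENNReal) / 2) ^ p = μ {ω | χ0 ω = g} := by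
      intro g hg
      rw [hχ0law g ?_]
      intro j
      have := (Fintype.mem_piFinset.mp (Finset.mem_filter.mp hg).1) j
      simpa using this
    rw [Finset.sum_congr rfl heq]
    have hd : ((SgnAll.filter (fun g => bad (sg g))) : Set (Fin p → ℤ)).PairwiseDisjoint
        (fun g => {ω | χ0 ω = g}) := by
      intro a _ b _ hab
      simp only [Function.onFun]
      rw [Set.disjoint_left]
      intro ω h1 h2
      rw [Set.mem_setOf_eq] at h1 h2
      exact hab (h1 ▸ h2 ▸ rfl)
    have hmeas : ∀ g ∈ SgnAll.filter (fun g => bad (sg g)),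
        MeasurableSet {ω | χ0 ω = g} := by
      intro g _
      exact hχ0m (measurableSet_singleton g)
    rw [← measure_biUnion_finset hd hmeas]
    refine le_trans (measure_mono ?_) hjer0
    intro ω hω
    simp only [Set.mem_iUnion] at hω
    obtain ⟨g, hg, hωg⟩ := hω
    rw [Set.mem_setOf_eq] at hωg
    obtain ⟨k, hk1, hk2, hkc⟩ := (Finset.mem_filter.mp hg).2
    have hcount : k ≤ (Finset.univ.filter (fun m => piStat p g m < t k)).card := by
      refine le_trans hkc ?_
      rw [hsgdef]
      exact sgv_count_le p H0.card hp0p H0 rfl g (t k)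
    have hos := orderStat_lt_of_count Finset.univ (piStat p g) (t k) k hk1 hcount
    exact ⟨k, hk1, hk2, by rw [hωg]; exact hos⟩
  -- conclusion
  have hGc : μ Gᶜ ≤ ENNReal.ofReal α := le_trans hstep3 (le_of_eq hDsum |>.trans hstep5)
  calc 1 - ENNReal.ofReal α ≤ 1 - μ Gᶜ := tsub_le_tsub_left hGc 1
    _ = μ G := by
        rw [measure_compl hGmeas (measure_ne_top μ G), measure_univ,
          ENNReal.sub_sub_cancel ENNReal.one_ne_top prob_le_one]
end
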